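/- arXiv:1707.04552 — 7 statements merged into one kernel-verified Lean document; each statement's English description precedes it below -/
import Mathlib

section
/- Let X be a metric space and E ⊆ X × X. Then E is uniformly bounded (i.e., sup{d(x,y) : (x,y) ∈ E} < ∞) if and only if for every very Lipschitz bounded sequence (fₙ) of real-valued functions on X, there exists n₁ such that |f_{n₁}(x) − f_{n₁}(y)| < 1 for all (x,y) ∈ E. -/
/-- A bounded sequence of bounded continuous functions is *very Lipschitz* if
for every `L > 0` the functions are eventually `L`-Lipschitz. -/
def VeryLipschitzSeq {X : Type*} [MetricSpace X] (f : ℕ → X → ℝ) : Prop :=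
  ∀ L > (0 : ℝ), ∃ n₀, ∀ n ≥ n₀, ∀ x y, |f n x - f n y| ≤ L * dist x y

lemma abs_min_sub_min_le_abs' (a b c : ℝ) : |min a c - min b c| ≤ |a - b| := by
  rcases le_total a c with h1 | h1 <;> rcases le_total b c with h2 | h2 <;>
    simp [min_eq_left, min_eq_right, *, abs_le] <;>
    constructor <;> cases abs_le.mp (le_refl |a - b|) <;> linarith [abs_nonneg (a - b),
      le_abs_self (a - b), neg_abs_le (a - b)]

theorem uniformly_bounded_iff_very_lipschitz_control {X : Type*} [MetricSpace X]
    (E : Set (X × X)) :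
    (∃ C : ℝ, ∀ p ∈ E, dist p.1 p.2 ≤ C) ↔
      (∀ f : ℕ → X → ℝ, (∃ C : ℝ, ∀ n x, |f n x| ≤ C) → (∀ n, Continuous (f n)) →
        VeryLipschitzSeq f → ∃ n₁, ∀ p ∈ E, |f n₁ p.1 - f n₁ p.2| < 1) := by
  constructor
  · rintro ⟨C, hC⟩ f _ _ hvl
    set C' := max C 0 with hC'
    have hC'0 : (0:ℝ) ≤ C' := le_max_right _ _
    have hL : (0:ℝ) < 1 / (2 * (C' + 1)) := by positivity
    obtain ⟨n₀, hn₀⟩ := hvl _ hL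
    refine ⟨n₀, fun p hp => ?_⟩
    have h1 := hn₀ n₀ le_rfl p.1 p.2
    have h2 : dist p.1 p.2 ≤ C' := (hC p hp).trans (le_max_left _ _)
    have : 1 / (2 * (C' + 1)) * dist p.1 p.2 < 1 := by
      rw [div_mul_eq_mul_div, div_lt_one (by positivity)]
      nlinarith [dist_nonneg (x := p.1) (y := p.2)]
    linarith
  · intro h
    by_contra hC
    push_neg at hC
    have hex : ∀ n : ℕ, ∃ p : X × X, p ∈ E ∧ ((n : ℝ) + 1) < dist p.1 p.2 := by
      intro n
      obtain ⟨p, hp, hd⟩ := hC ((n : ℝ) + 1)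
      exact ⟨p, hp, hd⟩
    choose g hgE hgd using hex
    set f : ℕ → X → ℝ := fun n x => min (dist x (g n).1) ((n : ℝ) + 1) / ((n : ℝ) + 1)
      with hf
    have hpos : ∀ n : ℕ, (0:ℝ) < (n : ℝ) + 1 := fun n => by positivity
    have hbd : ∃ C : ℝ, ∀ n x, |f n x| ≤ C := by
      refine ⟨1, fun n x => ?_⟩
      rw [hf, abs_div, abs_of_pos (hpos n), div_le_one (hpos n),
        abs_of_nonneg (le_min dist_nonneg (le_of_lt (hpos n)))]
      exact min_le_right _ _
    have hcont : ∀ n, Continuous (f n) := by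
      intro n
      exact ((continuous_dist.comp (continuous_id.prodMk continuous_const)).min
        continuous_const).div_const _
    have hlip : ∀ n x y, |f n x - f n y| ≤ 1 / ((n:ℝ) + 1) * dist x y := by
      intro n x y
      rw [hf]
      simp only
      rw [div_sub_div_same, abs_div, abs_of_pos (hpos n), div_le_iff₀ (hpos n)]
      have := abs_min_sub_min_le_abs' (dist x (g n).1) (dist y (g n).1) ((n:ℝ) + 1)
      have h2 := abs_dist_sub_le x y (g n).1
      calc |min (dist x (g n).1) ((n:ℝ)+1) - min (dist y (g n).1) ((n:ℝ)+1)|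
          ≤ |dist x (g n).1 - dist y (g n).1| := this
        _ ≤ dist x y := h2
        _ = 1 / ((n:ℝ)+1) * dist x y * ((n:ℝ)+1) := by field_simp
    have hvl : VeryLipschitzSeq f := by
      intro L hL
      obtain ⟨n₀, hn₀⟩ := exists_nat_gt (1 / L)
      refine ⟨n₀, fun n hn x y => ?_⟩
      refine (hlip n x y).trans (mul_le_mul_of_nonneg_right ?_ dist_nonneg)
      rw [div_le_iff₀ (hpos n)]
      rw [div_lt_iff₀ hL] at hn₀
      have : (n₀ : ℝ) ≤ n := by exact_mod_cast hn
      nlinarith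
    obtain ⟨n₁, hn₁⟩ := h f hbd hcont hvl
    have := hn₁ (g n₁) (hgE n₁)
    have h1 : f n₁ (g n₁).1 = 0 := by
      rw [hf]; simp [dist_self, min_eq_left (le_of_lt (hpos n₁))]
    have h2 : f n₁ (g n₁).2 = 1 := by
      rw [hf]
      have : min (dist (g n₁).2 (g n₁).1) ((n₁:ℝ) + 1) = (n₁:ℝ) + 1 := by
        rw [min_eq_right]
        rw [dist_comm]
        exact (hgd n₁).le
      simp only [this]
      field_simp
    rw [h1, h2] at this
    norm_num at this
end

section
/- Let X be a proper metric space and g a bounded continuous Higson function on X. Then g can be written as g = f + h where f is a Lipschitz–Higson function and h ∈ C₀(X) (h vanishes at infinity). -/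
/-! Put `f x = ⨅ y, g y + dist x y / φ x` for a weight `φ ≥ 1`. Only points `y` with
`dist x y < 2 M φ x` compete in this infimum (`M` bounds `|g|`), so `0 ≤ g x - f x` is at most the
oscillation of `g` on the ball of radius `2 M φ x` about `x`; and if `φ` is `K`-Lipschitz then
`f x - f x' ≤ (1 + 2 M K) dist x x' / φ x`. Hence `f` is Lipschitz–Higson once `φ → ∞`, and `g - f`
vanishes at infinity once `φ` grows so slowly that the Higson property controls the oscillation of
`g` on balls of radius `2 M φ x`. Such a `φ` is a 1-Lipschitz, piecewise linear function of
`dist x₀ x` that stays below `n + 1` until past the radius beyond which `g` oscillates by less than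
`1 / (n + 1)` over distances of order `n`. -/

/-- `g` is a Higson function: its oscillation over bounded distances vanishes at
infinity. -/
def IsHigson {X : Type*} [MetricSpace X] (g : X → ℝ) : Prop :=
  ∀ R > (0 : ℝ), ∀ ε > (0 : ℝ), ∃ A : Set X, IsCompact A ∧
    ∀ x y : X, x ∉ A → y ∉ A → dist x y < R → |g x - g y| < ε

/-- `f` is a Lipschitz–Higson function: for every `L > 0` there is a compact set
off which `f` is `L`-Lipschitz. -/
def IsLipHigson {X : Type*} [MetricSpace X] (f : X → ℝ) : Prop :=
  ∀ L > (0 : ℝ), ∃ A : Set X, IsCompact A ∧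
    ∀ x y : X, x ∉ A → y ∉ A → |f x - f y| ≤ L * dist x y

open Filter Set Topology

section Ramp

variable {w : ℕ → ℝ}

noncomputable def rampSup (w : ℕ → ℝ) (t : ℝ) : ℝ := ⨆ n : ℕ, min (n : ℝ) (t - w n)

lemma bddAbove_range_min_sub (hw : Monotone w) (t : ℝ) :
    BddAbove (range fun n : ℕ => min (n : ℝ) (t - w n)) :=
  ⟨t - w 0, by
    rintro _ ⟨n, rfl⟩
    exact (min_le_right _ _).trans (sub_le_sub_left (hw n.zero_le) t)⟩

lemma lipschitzWith_rampSup (hw : Monotone w) : LipschitzWith 1 (rampSup w) :=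
  LipschitzWith.of_le_add fun s t => ciSup_le fun n => by
    have h : min (n : ℝ) (s - w n) ≤ min (n : ℝ) (t - w n) + dist s t := by
      rw [← min_add_add_right]
      exact min_le_min (le_add_of_nonneg_right dist_nonneg)
        (by linarith [Real.sub_le_dist s t])
    exact h.trans (by gcongr; exact le_ciSup (bddAbove_range_min_sub hw t) n)

lemma rampSup_le (hw : Monotone w) {m : ℕ} {t : ℝ} (ht : t ≤ w m) : rampSup w t ≤ m :=
  ciSup_le fun n => by
    rcases le_total m n with h | h
    · exact (min_le_right _ _).trans (by linarith [hw h, (m.cast_nonneg : (0 : ℝ) ≤ m)])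
    · exact (min_le_left _ _).trans (by exact_mod_cast h)

lemma le_rampSup (hw : Monotone w) {N : ℕ} {t : ℝ} (ht : w N + N ≤ t) : (N : ℝ) ≤ rampSup w t :=
  le_ciSup_of_le (bddAbove_range_min_sub hw t) N (le_min le_rfl (by linarith))

lemma tendsto_rampSup (hw : Monotone w) : Tendsto (rampSup w) atTop atTop :=
  tendsto_atTop_atTop.2 fun b =>
    ⟨w ⌈b⌉₊ + ⌈b⌉₊, fun _ ht => (Nat.le_ceil b).trans (le_rampSup hw ht)⟩

end Ramp

lemma exists_monotone_tendsto_atTop_ge (a : ℕ → ℝ) :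
    ∃ w : ℕ → ℝ, Monotone w ∧ a ≤ w ∧ Tendsto w atTop atTop :=
  ⟨partialSups fun n => max (a n) n, (partialSups _).monotone,
    fun n => (le_max_left _ _).trans (le_partialSups (fun n => max (a n) (n : ℝ)) n),
    tendsto_atTop_mono
      (fun n => (le_max_right _ _).trans (le_partialSups (fun n => max (a n) n) n))
      tendsto_natCast_atTop_atTop⟩

lemma Filter.Tendsto.exists_ge_mem_Ico {w : ℕ → ℝ} (hw : Tendsto w atTop atTop) {m : ℕ} {t : ℝ}
    (ht : w m ≤ t) : ∃ n, m ≤ n ∧ t ∈ Ico (w n) (w (n + 1)) := by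
  classical
  have hex : ∃ k, t < w (k + m) :=
    (((tendsto_add_atTop_iff_nat m).2 hw).eventually_gt_atTop t).exists
  obtain ⟨j, hj⟩ := Nat.exists_eq_succ_of_ne_zero fun h : Nat.find hex = 0 =>
    not_lt.2 ht (by simpa [h] using Nat.find_spec hex)
  refine ⟨j + m, by omega, not_lt.1 (Nat.find_min hex (by omega)), ?_⟩
  simpa only [hj, Nat.succ_add] using Nat.find_spec hex

section InfConv

variable {X : Type*} [PseudoMetricSpace X] {g φ : X → ℝ} {M : ℝ} {K : NNReal}

noncomputable def infConv (g φ : X → ℝ) (x : X) : ℝ := ⨅ y, g y + dist x y / φ x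

lemma bddBelow_range_add_dist_div (hg : ∀ y, |g y| ≤ M) {x : X} (hx : 0 ≤ φ x) :
    BddBelow (range fun y => g y + dist x y / φ x) :=
  ⟨-M, by
    rintro _ ⟨y, rfl⟩
    have := div_nonneg dist_nonneg hx (a := dist x y)
    linarith [neg_abs_le (g y), hg y]⟩

lemma infConv_le_add (hg : ∀ y, |g y| ≤ M) {x : X} (hx : 0 ≤ φ x) (y : X) :
    infConv g φ x ≤ g y + dist x y / φ x :=
  ciInf_le (bddBelow_range_add_dist_div hg hx) y

lemma infConv_le_self (hg : ∀ y, |g y| ≤ M) {x : X} (hx : 0 ≤ φ x) : infConv g φ x ≤ g x := by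
  simpa using infConv_le_add hg hx x

lemma abs_infConv_le (hg : ∀ y, |g y| ≤ M) {x : X} (hx : 0 ≤ φ x) : |infConv g φ x| ≤ M := by
  have : Nonempty X := ⟨x⟩
  refine abs_le.2 ⟨le_ciInf fun y => ?_,
    (infConv_le_self hg hx).trans ((le_abs_self _).trans (hg x))⟩
  have := div_nonneg dist_nonneg hx (a := dist x y)
  linarith [neg_abs_le (g y), hg y]

lemma sub_infConv_le (hg : ∀ y, |g y| ≤ M) {x : X} (hx : 0 < φ x) {ε : ℝ} (hε : 0 ≤ ε)
    (hosc : ∀ y, dist x y < 2 * M * φ x → g x - g y ≤ ε) : g x - infConv g φ x ≤ ε := by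
  have : Nonempty X := ⟨x⟩
  refine sub_le_comm.1 (le_ciInf fun y => ?_)
  rcases lt_or_ge (dist x y) (2 * M * φ x) with h | h
  · linarith [hosc y h, div_nonneg dist_nonneg hx.le (a := dist x y)]
  · have : 2 * M ≤ dist x y / φ x := (le_div_iff₀ hx).2 h
    linarith [neg_abs_le (g y), hg y, le_abs_self (g x), hg x]

lemma infConv_sub_infConv_le (hg : ∀ y, |g y| ≤ M) (hφ : ∀ x, 0 < φ x) (x x' : X) :
    infConv g φ x - infConv g φ x' ≤ (dist x x' + 2 * M * |φ x - φ x'|) / φ x := by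
  have : Nonempty X := ⟨x⟩
  have hM : 0 ≤ M := (abs_nonneg _).trans (hg x)
  have ha : 0 ≤ (dist x x' + 2 * M * |φ x - φ x'|) / φ x := by have := hφ x; positivity
  refine sub_le_comm.1 (le_ciInf fun y => ?_)
  set D := dist x' y / φ x'
  have hD : 0 ≤ D := div_nonneg dist_nonneg (hφ x').le
  -- only `y` with `D < 2 M` compete, and for them trading `φ x'` for `φ x` costs at most
  -- `2 M |φ x - φ x'| / φ x`
  rcases lt_or_ge D (2 * M) with h | h
  · have hxy : dist x y / φ x ≤ dist x x' / φ x + D + 2 * M * |φ x - φ x'| / φ x := by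
      have hsplit : dist x' y / φ x = D + D * (φ x' - φ x) / φ x := by
        rw [(div_mul_cancel₀ (dist x' y) (hφ x').ne').symm]
        field_simp [(hφ x).ne']
        ring
      have hD' : D * (φ x' - φ x) ≤ 2 * M * |φ x - φ x'| := by
        rw [abs_sub_comm]
        exact (mul_le_mul_of_nonneg_left (le_abs_self _) hD).trans
          (mul_le_mul_of_nonneg_right h.le (abs_nonneg _))
      calc dist x y / φ x ≤ dist x x' / φ x + dist x' y / φ x := by
            rw [← add_div]; gcongr; exacts [(hφ x).le, dist_triangle _ _ _]
        _ ≤ _ := by linarith [div_le_div_of_nonneg_right hD' (hφ x).le]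
    have := infConv_le_add hg (hφ x).le y
    rw [add_div] at ha ⊢
    linarith
  · have := infConv_le_self hg (hφ x).le
    linarith [neg_abs_le (g y), hg y, le_abs_self (g x), hg x]

lemma infConv_sub_infConv_le_mul (hg : ∀ y, |g y| ≤ M) (hφ : ∀ x, 0 < φ x)
    (hφK : LipschitzWith K φ) (x x' : X) :
    infConv g φ x - infConv g φ x' ≤ (1 + 2 * M * K) * dist x x' / φ x := by
  have hM : 0 ≤ M := (abs_nonneg _).trans (hg x)
  have hΔ : |φ x - φ x'| ≤ K * dist x x' := by
    simpa only [Real.dist_eq] using hφK.dist_le_mul x x'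
  refine (infConv_sub_infConv_le hg hφ x x').trans ?_
  rw [add_mul, one_mul, mul_assoc (2 * M)]
  gcongr
  exact (hφ x).le

lemma lipschitzWith_infConv (hg : ∀ y, |g y| ≤ M) (hφ : ∀ x, 1 ≤ φ x)
    (hφK : LipschitzWith K φ) : LipschitzWith (1 + 2 * M * K).toNNReal (infConv g φ) := by
  refine LipschitzWith.of_le_add_mul' _ fun x x' => ?_
  have hM : 0 ≤ M := (abs_nonneg _).trans (hg x)
  have h := infConv_sub_infConv_le_mul hg (fun x => one_pos.trans_le (hφ x)) hφK x x'
  have : (1 + 2 * M * K) * dist x x' / φ x ≤ (1 + 2 * M * K) * dist x x' :=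
    div_le_self (by positivity) (hφ x)
  linarith

lemma tendsto_sub_infConv {l : Filter X} (hg : ∀ y, |g y| ≤ M) (hφ : ∀ x, 0 < φ x)
    (hscale : ∀ ε > 0, ∀ᶠ x in l, ∀ y, dist x y < 2 * M * φ x → |g x - g y| < ε) :
    Tendsto (g - infConv g φ) l (𝓝 0) := by
  refine tendsto_order.2 ⟨fun a ha => Eventually.of_forall fun x => ?_, fun a ha => ?_⟩
  · exact ha.trans_le (sub_nonneg.2 (infConv_le_self hg (hφ x).le))
  · filter_upwards [hscale (a / 2) (half_pos ha)] with x hx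
    refine (sub_infConv_le hg (hφ x) (half_pos ha).le fun y hy => ?_).trans_lt (half_lt_self ha)
    exact (le_abs_self _).trans (hx y hy).le

end InfConv

section Higson

variable {X : Type*} [MetricSpace X]

lemma isLipHigson_of_sub_le {f φ : X → ℝ} {C : ℝ} (hφ : Tendsto φ (cocompact X) atTop)
    (hf : ∀ x x', f x - f x' ≤ C * dist x x' / φ x) : IsLipHigson f := by
  intro L hL
  obtain ⟨A, hA, hAφ⟩ := mem_cocompact.1 (hφ.eventually_ge_atTop (max (C / L) 1))
  have key : ∀ x y, x ∉ A → f x - f y ≤ L * dist x y := fun x y hx => by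
    have hx := hAφ hx
    have hpos : 0 < φ x := one_pos.trans_le ((le_max_right _ _).trans hx)
    have hCL : C ≤ L * φ x := by
      have := (div_le_iff₀ hL).1 ((le_max_left _ _).trans hx)
      linarith
    calc f x - f y ≤ C * dist x y / φ x := hf x y
      _ = C / φ x * dist x y := by ring
      _ ≤ L * dist x y := by gcongr; exact (div_le_iff₀ hpos).2 hCL
  exact ⟨A, hA, fun x y hx hy => abs_sub_le_iff.2 ⟨key x y hx, dist_comm x y ▸ key y x hy⟩⟩

variable [ProperSpace X]

lemma IsHigson.exists_radius {g : X → ℝ} (hg : IsHigson g) (x₀ : X) {R ε : ℝ} (hR : 0 < R)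
    (hε : 0 < ε) : ∃ ρ, ∀ x, ρ ≤ dist x₀ x → ∀ y, dist x y < R → |g x - g y| < ε := by
  obtain ⟨A, hA, hAg⟩ := hg R hR ε hε
  have hev : ∀ᶠ x in cocompact X, ∀ y, dist x y < R → |g x - g y| < ε := by
    filter_upwards [(hA.cthickening (r := R)).compl_mem_cocompact] with x hx y hxy
    exact hAg x y (fun h => hx (Metric.self_subset_cthickening A h))
      (fun h => hx (Metric.mem_cthickening_of_dist_le x y R A h hxy.le)) hxy
  rw [← comap_dist_left_atTop_eq_cocompact x₀, eventually_comap, eventually_atTop] at hev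
  obtain ⟨ρ, hρ⟩ := hev
  exact ⟨ρ, fun x hx => hρ _ hx x rfl⟩

theorem IsHigson.exists_scale {g : X → ℝ} (hg : IsHigson g) (c : ℝ) :
    ∃ φ : X → ℝ, LipschitzWith 1 φ ∧ (∀ x, 1 ≤ φ x) ∧ Tendsto φ (cocompact X) atTop ∧
      ∀ ε > 0, ∀ᶠ x in cocompact X, ∀ y, dist x y < c * φ x → |g x - g y| < ε := by
  rcases isEmpty_or_nonempty X with hX | ⟨⟨x₀⟩⟩
  · exact ⟨fun _ => 1, (LipschitzWith.const 1).weaken zero_le_one, fun _ => le_rfl,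
      by simp [cocompact_eq_bot], by simp [cocompact_eq_bot]⟩
  choose ρ hρ using fun n : ℕ => hg.exists_radius x₀ (R := (|c| + 1) * (n + 1))
    (ε := 1 / (n + 1)) (by positivity) (by positivity)
  obtain ⟨w, hw, hρw, hwtop⟩ := exists_monotone_tendsto_atTop_ge ρ
  have hd := tendsto_dist_left_cocompact_atTop x₀
  refine ⟨fun x => max 1 (rampSup w (dist x₀ x)), ?_, fun x => le_max_left _ _,
    tendsto_atTop_mono (fun x => le_max_right _ _) ((tendsto_rampSup hw).comp hd),
    fun ε hε => ?_⟩
  · simpa using ((lipschitzWith_rampSup hw).comp (LipschitzWith.dist_right x₀)).const_max 1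
  obtain ⟨m, hm⟩ := exists_nat_one_div_lt hε
  filter_upwards [hd.eventually_ge_atTop (w m)] with x hx y hxy
  obtain ⟨n, hmn, hwn, hwn1⟩ := hwtop.exists_ge_mem_Ico hx
  have hφx : max 1 (rampSup w (dist x₀ x)) ≤ n + 1 :=
    max_le (by linarith [(n.cast_nonneg : (0 : ℝ) ≤ n)]) (by exact_mod_cast rampSup_le hw hwn1.le)
  have hdxy : dist x y < (|c| + 1) * (n + 1) :=
    calc dist x y < c * max 1 (rampSup w (dist x₀ x)) := hxy
      _ ≤ |c| * (n + 1) := (mul_le_mul_of_nonneg_right (le_abs_self c)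
          (zero_le_one.trans (le_max_left _ _))).trans
            (mul_le_mul_of_nonneg_left hφx (abs_nonneg c))
      _ ≤ (|c| + 1) * (n + 1) := by gcongr; linarith
  calc |g x - g y| < 1 / (n + 1) := hρ n x ((hρw n).trans hwn) y hdxy
    _ ≤ 1 / (m + 1) := by gcongr
    _ < ε := hm

end Higson

theorem higson_eq_lipHigson_add_C0 {X : Type*} [MetricSpace X] [ProperSpace X]
    (g : X → ℝ) (hgc : Continuous g) (hgb : ∃ M : ℝ, ∀ x, |g x| ≤ M)
    (hg : IsHigson g) :
    ∃ f h : X → ℝ, Continuous f ∧ (∃ M : ℝ, ∀ x, |f x| ≤ M) ∧ IsLipHigson f ∧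
      Continuous h ∧ Filter.Tendsto h (Filter.cocompact X) (nhds 0) ∧
      g = f + h := by
  obtain ⟨M, hM⟩ := hgb
  obtain ⟨φ, hφL, hφ1, hφtop, hφg⟩ := hg.exists_scale (2 * M)
  have hφ0 : ∀ x, 0 < φ x := fun x => one_pos.trans_le (hφ1 x)
  have hfc : Continuous (infConv g φ) := (lipschitzWith_infConv hM hφ1 hφL).continuous
  exact ⟨infConv g φ, g - infConv g φ, hfc, ⟨M, fun x => abs_infConv_le hM (hφ0 x).le⟩,
    isLipHigson_of_sub_le hφtop (infConv_sub_infConv_le_mul hM hφ0 hφL), hgc.sub hfc,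
    tendsto_sub_infConv hM hφ0 hφg, (add_sub_cancel _ _).symm⟩
end

section
/- Let X be a proper metric space with basepoint x₀, let g be a bounded Lipschitz–Higson function on X, and let (R_k) be a sequence of positive reals with R_k → ∞. Define f_k := (1 − e_{R_k})·g, where e_R(x) = max{0, 1 − d(x, B_R(x₀))/R}. Then the sequence (f_k) is very Lipschitz: for every L > 0 there exists k₀ such that f_k is L-Lipschitz for all k ≥ k₀. -/
/-!
Once `B_R(x₀)` contains the compact set off which `g` is `L/2`-Lipschitz, the truncation
`(1 - e_R) g` vanishes on the ball, and off the ball it is a product of `g`, which is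
`L/2`-Lipschitz there, with the `1/R`-Lipschitz factor `1 - e_R ∈ [0, 1]`; as `|g| ≤ 1`,
the product rule gives the Lipschitz constant `L/2 + 1/R ≤ L` for `R ≥ 2/L`.
-/

/-- The cutoff function `e_R(x) = max {0, 1 - d(x, B_R(x₀))/R}`. -/
noncomputable def cutoffE {X : Type*} [MetricSpace X] (x₀ : X) (R : ℝ) (x : X) : ℝ :=
  max 0 (1 - Metric.infDist x (Metric.ball x₀ R) / R)

open Metric

section Cutoff

variable {X : Type*} [MetricSpace X] (x₀ : X) {R : ℝ}

lemma one_sub_cutoffE_le_one (x : X) : 1 - cutoffE x₀ R x ≤ 1 := by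
  unfold cutoffE
  linarith [le_max_left 0 (1 - infDist x (ball x₀ R) / R)]

lemma one_sub_cutoffE_nonneg (hR : 0 ≤ R) (x : X) : 0 ≤ 1 - cutoffE x₀ R x := by
  have : 0 ≤ infDist x (ball x₀ R) / R := div_nonneg infDist_nonneg hR
  exact sub_nonneg.mpr (max_le zero_le_one (by linarith))

lemma one_sub_cutoffE_le_infDist_div (x : X) :
    1 - cutoffE x₀ R x ≤ infDist x (ball x₀ R) / R := by
  unfold cutoffE
  linarith [le_max_right 0 (1 - infDist x (ball x₀ R) / R)]

lemma cutoffE_eq_one_of_mem {x : X} (hx : x ∈ ball x₀ R) : cutoffE x₀ R x = 1 := by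
  simp [cutoffE, infDist_zero_of_mem hx]

lemma abs_cutoffE_sub_le (hR : 0 ≤ R) (x y : X) :
    |cutoffE x₀ R x - cutoffE x₀ R y| ≤ dist x y / R := by
  have hinfDist : |infDist x (ball x₀ R) - infDist y (ball x₀ R)| ≤ dist x y := by
    simpa [Real.dist_eq] using (lipschitz_infDist_pt (ball x₀ R)).dist_le_mul x y
  calc |cutoffE x₀ R x - cutoffE x₀ R y|
      ≤ |(1 - infDist x (ball x₀ R) / R) - (1 - infDist y (ball x₀ R) / R)| :=
        (abs_max_sub_max_le_max _ _ _ _).trans (by simp)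
    _ = |infDist x (ball x₀ R) - infDist y (ball x₀ R)| / R := by
        rw [← abs_of_nonneg hR, ← abs_div, abs_of_nonneg hR, ← abs_neg]
        ring_nf
    _ ≤ dist x y / R := by gcongr

end Cutoff

section Truncation

variable {X : Type*} [MetricSpace X] (x₀ : X) {R : ℝ} {g : X → ℝ}

lemma abs_truncation_sub_le_of_mem_ball (hg1 : ∀ x, |g x| ≤ 1) (hR : 0 ≤ R) {x : X}
    (hx : x ∈ ball x₀ R) (y : X) :
    |(1 - cutoffE x₀ R x) * g x - (1 - cutoffE x₀ R y) * g y| ≤ dist x y / R := by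
  rw [cutoffE_eq_one_of_mem x₀ hx, sub_self, zero_mul, zero_sub, abs_neg, abs_mul,
    abs_of_nonneg (one_sub_cutoffE_nonneg x₀ hR y)]
  calc (1 - cutoffE x₀ R y) * |g y| ≤ 1 - cutoffE x₀ R y :=
        mul_le_of_le_one_right (one_sub_cutoffE_nonneg x₀ hR y) (hg1 y)
    _ ≤ infDist y (ball x₀ R) / R := one_sub_cutoffE_le_infDist_div x₀ y
    _ ≤ dist x y / R := by
        gcongr
        exact dist_comm x y ▸ infDist_le_dist_of_mem hx

lemma abs_truncation_sub_le (hg1 : ∀ x, |g x| ≤ 1) (hR : 0 ≤ R) {K : ℝ} (hK : 0 ≤ K)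
    {A : Set X} (hA : A ⊆ ball x₀ R)
    (hgA : ∀ x y : X, x ∉ A → y ∉ A → |g x - g y| ≤ K * dist x y) (x y : X) :
    |(1 - cutoffE x₀ R x) * g x - (1 - cutoffE x₀ R y) * g y| ≤ (K + R⁻¹) * dist x y := by
  have hball : dist x y / R ≤ (K + R⁻¹) * dist x y := by
    rw [div_eq_inv_mul]; gcongr; linarith
  by_cases hx : x ∈ ball x₀ R
  · exact (abs_truncation_sub_le_of_mem_ball x₀ hg1 hR hx y).trans hball
  by_cases hy : y ∈ ball x₀ R
  · rw [dist_comm] at hball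
    rw [abs_sub_comm, dist_comm]
    exact (abs_truncation_sub_le_of_mem_ball x₀ hg1 hR hy x).trans hball
  set e := cutoffE x₀ R
  have hex : |1 - e x| ≤ 1 := abs_le.mpr
    ⟨by linarith [one_sub_cutoffE_nonneg x₀ hR x], one_sub_cutoffE_le_one x₀ x⟩
  have hgxy : |g x - g y| ≤ K * dist x y := hgA x y (fun h ↦ hx (hA h)) (fun h ↦ hy (hA h))
  have hexy : |e y - e x| ≤ dist x y / R := by
    rw [abs_sub_comm]; exact abs_cutoffE_sub_le x₀ hR x y
  calc |(1 - e x) * g x - (1 - e y) * g y|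
      = |(1 - e x) * (g x - g y) + (e y - e x) * g y| := by ring_nf
    _ ≤ |1 - e x| * |g x - g y| + |e y - e x| * |g y| := by
        rw [← abs_mul, ← abs_mul]; exact abs_add_le _ _
    _ ≤ 1 * (K * dist x y) + dist x y / R * 1 := by
        gcongr
        · exact hg1 y
    _ = (K + R⁻¹) * dist x y := by ring

end Truncation

theorem lipHigson_truncations_very_lipschitz_general {X : Type*} [MetricSpace X]
    (x₀ : X) (g : X → ℝ)
    (hg1 : ∀ x, |g x| ≤ 1) (hg : IsLipHigson g)
    (R : ℕ → ℝ)
    (hR : Filter.Tendsto R Filter.atTop Filter.atTop) :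
    ∀ L > (0 : ℝ), ∃ k₀, ∀ k ≥ k₀, ∀ x y : X,
      |(1 - cutoffE x₀ (R k) x) * g x - (1 - cutoffE x₀ (R k) y) * g y|
        ≤ L * dist x y := by
  intro L hL
  obtain ⟨A, hA, hgA⟩ := hg (L / 2) (by positivity)
  obtain ⟨r, hAr⟩ := hA.isBounded.subset_closedBall x₀
  obtain ⟨k₀, hk₀⟩ := Filter.eventually_atTop.mp
    ((hR.eventually_gt_atTop r).and (hR.eventually_ge_atTop (2 / L)))
  refine ⟨k₀, fun k hk x y ↦ ?_⟩
  obtain ⟨hrR, hLR⟩ := hk₀ k hk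
  have hRinv : (R k)⁻¹ ≤ L / 2 := inv_div 2 L ▸ inv_anti₀ (by positivity) hLR
  calc _ ≤ (L / 2 + (R k)⁻¹) * dist x y :=
        abs_truncation_sub_le x₀ hg1 ((by positivity : (0 : ℝ) ≤ 2 / L).trans hLR)
          (by positivity) (hAr.trans (closedBall_subset_ball hrR)) hgA x y
    _ ≤ L * dist x y := by gcongr; linarith

theorem lipHigson_truncations_very_lipschitz {X : Type*} [MetricSpace X]
    [ProperSpace X] (x₀ : X) (g : X → ℝ) (hgc : Continuous g)
    (hg1 : ∀ x, |g x| ≤ 1) (hg : IsLipHigson g)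
    (R : ℕ → ℝ) (hRpos : ∀ k, 0 < R k)
    (hR : Filter.Tendsto R Filter.atTop Filter.atTop) :
    ∀ L > (0 : ℝ), ∃ k₀, ∀ k ≥ k₀, ∀ x y : X,
      |(1 - cutoffE x₀ (R k) x) * g x - (1 - cutoffE x₀ (R k) y) * g y|
        ≤ L * dist x y :=
  lipHigson_truncations_very_lipschitz_general x₀ g hg1 hg R hR
end

section
/- Let H be a Hilbert space and G a subgroup of the unitary group of H that is compact in the strong-* topology. Then there is a conditional expectation E_G : B(H) → G' (the commutant of G) given by integrating u ↦ u*au against Haar measure on G, and it satisfies ‖E_G(a) − a‖ ≤ sup_{u∈G} ‖[a,u]‖ for all a ∈ B(H). -/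
/-!
Since `u ↦ u⁻¹ a u` is only strongly continuous, `E a = ∫ u⁻¹ a u dμ(u)` is defined vector by
vector, as the operator `ξ ↦ ∫ u⁻¹ a u ξ dμ(u)`; for unitaries `u⁻¹ = u*`. The right translates of
`μ` are again Haar probability measures, hence equal to `μ`, and this gives `v⁻¹ (E a) v = E a`.
Every conjugate `u⁻¹ a u` has norm `‖a‖` and is positive when `a` is, and an average inherits both
properties. Finally `u⁻¹ a u - a = u⁻¹ [a, u]`, so `E a - a` is an average of operators of norm at
most `sup ‖[a, u]‖`.
-/

open MeasureTheory

namespace ContinuousLinearMap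

section StrongIntegral

variable {α 𝕜 E F : Type*} [MeasurableSpace α] {μ : Measure α} [RCLike 𝕜]
  [NormedAddCommGroup E] [NormedSpace 𝕜 E] [NormedAddCommGroup F] [NormedSpace 𝕜 F]
  [NormedSpace ℝ F] [SMulCommClass ℝ 𝕜 F]

/-- The operator `x ↦ ∫ a, T a x ∂μ`, with junk value `0` unless every `a ↦ T a x` is integrable
and the integral is bounded in `x`. -/
noncomputable def strongIntegral (T : α → E →L[𝕜] F) (μ : Measure α) : E →L[𝕜] F :=
  open Classical in
  if h : (∀ x, Integrable (fun a => T a x) μ) ∧ ∃ C, ∀ x, ‖∫ a, T a x ∂μ‖ ≤ C * ‖x‖ then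
    LinearMap.mkContinuousOfExistsBound
      { toFun := fun x => ∫ a, T a x ∂μ
        map_add' := fun x y => by
          simp only [map_add, integral_add (h.1 x) (h.1 y)]
        map_smul' := fun c x => by
          simp only [map_smul, integral_smul, RingHom.id_apply] }
      h.2
  else 0

theorem strongIntegral_apply [IsFiniteMeasure μ] {T : α → E →L[𝕜] F} {C : ℝ}
    (hT : ∀ x, Integrable (fun a => T a x) μ) (hC : ∀ a, ‖T a‖ ≤ C) (x : E) :
    strongIntegral T μ x = ∫ a, T a x ∂μ := by
  have hbound : ∀ x, ‖∫ a, T a x ∂μ‖ ≤ C * μ.real Set.univ * ‖x‖ := fun x =>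
    calc ‖∫ a, T a x ∂μ‖ ≤ C * ‖x‖ * μ.real Set.univ :=
          norm_integral_le_of_norm_le_const <| .of_forall fun a => (T a).le_of_opNorm_le (hC a) x
      _ = C * μ.real Set.univ * ‖x‖ := by ring
  rw [strongIntegral, dif_pos ⟨hT, _, hbound⟩]
  rfl

variable [CompleteSpace F]

theorem strongIntegral_const [IsProbabilityMeasure μ] (A : E →L[𝕜] F) :
    strongIntegral (fun _ => A) μ = A := by
  ext x
  rw [strongIntegral_apply (fun x => integrable_const (A x)) (fun _ => le_rfl)]
  simp

theorem norm_strongIntegral_sub_le [IsProbabilityMeasure μ] {T : α → E →L[𝕜] F}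
    {A : E →L[𝕜] F} {D : ℝ} (hT : ∀ x, Integrable (fun a => T a x) μ)
    (hD : ∀ a, ‖T a - A‖ ≤ D) : ‖strongIntegral T μ - A‖ ≤ D := by
  have hC a : ‖T a‖ ≤ D + ‖A‖ := by linarith [norm_sub_norm_le (T a) A, hD a]
  have ⟨a₀⟩ := nonempty_of_isProbabilityMeasure μ
  refine opNorm_le_bound _ ((norm_nonneg _).trans (hD a₀)) fun x => ?_
  have hA : A x = ∫ _, A x ∂μ := by simp
  calc ‖(strongIntegral T μ - A) x‖ = ‖∫ a, (T a - A) x ∂μ‖ := by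
        rw [sub_apply, strongIntegral_apply hT hC, hA, ← integral_sub (hT x) (integrable_const _)]
        simp only [sub_apply]
    _ ≤ D * ‖x‖ := by
        simpa using norm_integral_le_of_norm_le_const (μ := μ)
          (.of_forall fun a => (T a - A).le_of_opNorm_le (hD a) x)

variable {E₁ F₁ : Type*} [NormedAddCommGroup E₁] [NormedSpace 𝕜 E₁] [NormedAddCommGroup F₁]
  [NormedSpace 𝕜 F₁] [NormedSpace ℝ F₁] [SMulCommClass ℝ 𝕜 F₁] [CompleteSpace F₁]

theorem comp_strongIntegral_comp [IsFiniteMeasure μ] {T : α → E →L[𝕜] F} {C : ℝ}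
    (hT : ∀ x, Integrable (fun a => T a x) μ) (hC : ∀ a, ‖T a‖ ≤ C)
    (L : F →L[𝕜] F₁) (R : E₁ →L[𝕜] E) :
    L ∘L strongIntegral T μ ∘L R = strongIntegral (fun a => L ∘L T a ∘L R) μ := by
  have hC' a : ‖L ∘L T a ∘L R‖ ≤ ‖L‖ * (C * ‖R‖) :=
    (opNorm_comp_le _ _).trans <| by
      gcongr; exact (opNorm_comp_le _ _).trans (by gcongr; exact hC a)
  ext x
  rw [comp_apply, comp_apply, strongIntegral_apply hT hC,
    strongIntegral_apply (fun x : E₁ => L.integrable_comp (hT (R x))) hC']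
  exact (L.integral_comp_comm (hT (R x))).symm

end StrongIntegral

section Hilbert

variable {α 𝕜 F : Type*} [MeasurableSpace α] {μ : Measure α} [RCLike 𝕜]
  [NormedAddCommGroup F] [InnerProductSpace 𝕜 F] [NormedSpace ℝ F] [SMulCommClass ℝ 𝕜 F]
  [CompleteSpace F]

theorem inner_strongIntegral_apply [IsFiniteMeasure μ] {T : α → F →L[𝕜] F} {C : ℝ}
    (hT : ∀ x, Integrable (fun a => T a x) μ) (hC : ∀ a, ‖T a‖ ≤ C) (x y : F) :
    inner 𝕜 (strongIntegral T μ x) y = ∫ a, inner 𝕜 (T a x) y ∂μ := by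
  rw [strongIntegral_apply hT hC, ← inner_conj_symm, ← integral_inner (hT x), ← integral_conj]
  simp_rw [inner_conj_symm]

theorem isPositive_strongIntegral [IsFiniteMeasure μ] {T : α → F →L[𝕜] F} {C : ℝ}
    (hT : ∀ x, Integrable (fun a => T a x) μ) (hC : ∀ a, ‖T a‖ ≤ C)
    (hpos : ∀ a, (T a).IsPositive) : (strongIntegral T μ).IsPositive := by
  refine ⟨fun x y => ?_, fun x => ?_⟩
  · simp only [coe_coe]
    rw [inner_strongIntegral_apply hT hC, strongIntegral_apply hT hC,
      ← integral_inner (hT y)]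
    exact integral_congr_ae (.of_forall fun a => (hpos a).isSymmetric x y)
  · rw [reApplyInnerSelf, inner_strongIntegral_apply hT hC,
      ← integral_re ((hT x).inner_const x)]
    exact integral_nonneg fun a => (hpos a).re_inner_nonneg_left x

end Hilbert

section Group

variable {G 𝕜 E F : Type*} [Group G] [MeasurableSpace G] [MeasurableMul G] {μ : Measure G}
  [RCLike 𝕜] [NormedAddCommGroup E] [NormedSpace 𝕜 E] [NormedAddCommGroup F] [NormedSpace 𝕜 F]
  [NormedSpace ℝ F] [SMulCommClass ℝ 𝕜 F]

theorem strongIntegral_comp_mul_right [IsFiniteMeasure μ] [μ.IsMulRightInvariant]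
    {T : G → E →L[𝕜] F} {C : ℝ} (hT : ∀ x, Integrable (fun a => T a x) μ)
    (hC : ∀ a, ‖T a‖ ≤ C) (g : G) :
    strongIntegral (fun a => T (a * g)) μ = strongIntegral T μ := by
  ext x
  rw [strongIntegral_apply (fun x => (hT x).comp_mul_right g) (fun a => hC (a * g)),
    strongIntegral_apply hT hC]
  exact integral_mul_right_eq_self (fun a => T a x) g

end Group

theorem continuous_apply_of_forall_norm_le {X 𝕜 E F : Type*} [TopologicalSpace X]
    [NontriviallyNormedField 𝕜] [NormedAddCommGroup E] [NormedSpace 𝕜 E] [NormedAddCommGroup F]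
    [NormedSpace 𝕜 F] {T : X → E →L[𝕜] F} {C : ℝ} (hT : ∀ x, Continuous fun u => T u x)
    (hC : ∀ u, ‖T u‖ ≤ C) {v : X → E} (hv : Continuous v) : Continuous fun u => T u (v u) := by
  refine continuous_iff_continuousAt.2 fun u₀ => ?_
  have hsmall : Filter.Tendsto (fun u => T u (v u - v u₀)) (nhds u₀) (nhds 0) :=
    squeeze_zero_norm (fun u => (T u).le_of_opNorm_le (hC u) _)
      (by simpa using ((hv.tendsto u₀).sub_const (v u₀)).norm.const_mul C)
  simpa [ContinuousAt] using hsmall.add ((hT (v u₀)).tendsto u₀)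

end ContinuousLinearMap

theorem MeasureTheory.Measure.isMulRightInvariant_of_isProbabilityMeasure {G : Type*} [Group G]
    [TopologicalSpace G] [IsTopologicalGroup G] [LocallyCompactSpace G] [MeasurableSpace G]
    [BorelSpace G] (μ : Measure G) [μ.IsHaarMeasure] [IsProbabilityMeasure μ] :
    μ.IsMulRightInvariant where
  map_mul_right_eq_self g :=
    have := isProbabilityMeasure_map (μ := μ) (measurable_mul_const g).aemeasurable
    isHaarMeasure_eq_of_isProbabilityMeasure _ μ

theorem MonoidHom.star_map_eq_map_inv {M A : Type*} [Group M] [Monoid A] [StarMul A]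
    (π : M →* A) {u : M} (hu : π u ∈ unitary A) : star (π u) = π u⁻¹ :=
  calc star (π u) = star (π u) * (π u * π u⁻¹) := by
        rw [← map_mul, mul_inv_cancel, map_one, mul_one]
    _ = π u⁻¹ := by rw [← mul_assoc, Unitary.star_mul_self_of_mem hu, one_mul]

section ConjAverage

open ContinuousLinearMap

variable {H G : Type*} [NormedAddCommGroup H] [InnerProductSpace ℂ H] [Group G]

noncomputable def conjAverage [MeasurableSpace G] (π : G →* (H →L[ℂ] H)) (μ : Measure G)
    (a : H →L[ℂ] H) : H →L[ℂ] H :=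
  strongIntegral (fun u => π u⁻¹ * a * π u) μ

variable [CompleteSpace H] {π : G →* (H →L[ℂ] H)}

theorem norm_map_inv_mul_mul_map (hunitary : ∀ u, π u ∈ unitary (H →L[ℂ] H)) (a : H →L[ℂ] H)
    (u : G) : ‖π u⁻¹ * a * π u‖ = ‖a‖ := by
  rw [CStarRing.norm_mul_mem_unitary _ (hunitary u),
    CStarRing.norm_mem_unitary_mul _ (hunitary u⁻¹)]

theorem norm_map_le_one (hunitary : ∀ u, π u ∈ unitary (H →L[ℂ] H)) (u : G) : ‖π u‖ ≤ 1 := by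
  simpa using (CStarRing.norm_mem_unitary_mul (1 : H →L[ℂ] H) (hunitary u)).le.trans norm_id_le

variable [MeasurableSpace G] {μ : Measure G}

theorem conjAverage_eq_self_of_commute [IsProbabilityMeasure μ] {b : H →L[ℂ] H}
    (hb : ∀ u, b * π u = π u * b) : conjAverage π μ b = b := by
  have hconj u : π u⁻¹ * b * π u = b := by
    rw [mul_assoc, hb, ← mul_assoc, ← map_mul, inv_mul_cancel, map_one, one_mul]
  simp only [conjAverage, hconj, strongIntegral_const]

variable [TopologicalSpace G] [IsTopologicalGroup G] [CompactSpace G] [BorelSpace G]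

theorem integrable_map_inv_mul_mul_map_apply [IsFiniteMeasure μ]
    (hunitary : ∀ u, π u ∈ unitary (H →L[ℂ] H)) (hcont : ∀ ξ, Continuous fun u => π u ξ)
    (a : H →L[ℂ] H) (ξ : H) : Integrable (fun u => (π u⁻¹ * a * π u) ξ) μ :=
  (continuous_apply_of_forall_norm_le (fun ξ => (hcont ξ).comp continuous_inv)
    (fun u => norm_map_le_one hunitary u⁻¹)
    (a.continuous.comp (hcont ξ))).integrable_of_hasCompactSupport (.of_compactSpace _)

theorem inner_conjAverage_apply [IsFiniteMeasure μ] (hunitary : ∀ u, π u ∈ unitary (H →L[ℂ] H))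
    (hcont : ∀ ξ, Continuous fun u => π u ξ) (a : H →L[ℂ] H) (ξ η : H) :
    inner ℂ (conjAverage π μ a ξ) η = ∫ u, inner ℂ ((star (π u) * a * π u) ξ) η ∂μ := by
  simp_rw [π.star_map_eq_map_inv (hunitary _)]
  exact inner_strongIntegral_apply (integrable_map_inv_mul_mul_map_apply hunitary hcont a)
    (fun u => (norm_map_inv_mul_mul_map hunitary a u).le) ξ η

theorem conjAverage_mul_mul [IsFiniteMeasure μ] (hunitary : ∀ u, π u ∈ unitary (H →L[ℂ] H))
    (hcont : ∀ ξ, Continuous fun u => π u ξ) (a b₁ b₂ : H →L[ℂ] H)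
    (hb₁ : ∀ u, b₁ * π u = π u * b₁) (hb₂ : ∀ u, b₂ * π u = π u * b₂) :
    conjAverage π μ (b₁ * a * b₂) = b₁ * conjAverage π μ a * b₂ := by
  have hconj u : π u⁻¹ * (b₁ * a * b₂) * π u = b₁ * (π u⁻¹ * a * π u) * b₂ := by
    simp only [← mul_assoc, ← hb₁ u⁻¹]
    simp only [mul_assoc, hb₂ u]
  simp only [conjAverage, hconj]
  exact (comp_strongIntegral_comp (integrable_map_inv_mul_mul_map_apply (μ := μ) hunitary hcont a)
    (fun u => (norm_map_inv_mul_mul_map hunitary a u).le) b₁ b₂).symm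

theorem conjAverage_mul_map_comm [IsProbabilityMeasure μ] [μ.IsHaarMeasure]
    (hunitary : ∀ u, π u ∈ unitary (H →L[ℂ] H)) (hcont : ∀ ξ, Continuous fun u => π u ξ)
    (a : H →L[ℂ] H) (v : G) : conjAverage π μ a * π v = π v * conjAverage π μ a := by
  have := μ.isMulRightInvariant_of_isProbabilityMeasure
  have hT := integrable_map_inv_mul_mul_map_apply (μ := μ) hunitary hcont a
  have hC u := (norm_map_inv_mul_mul_map hunitary a u).le
  have hconj u : π v⁻¹ * (π u⁻¹ * a * π u * π v) = π (u * v)⁻¹ * a * π (u * v) := by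
    simp only [mul_inv_rev, map_mul, mul_assoc]
  have hshift : π v⁻¹ * conjAverage π μ a * π v = conjAverage π μ a := by
    rw [conjAverage, mul_def, mul_def, comp_assoc, comp_strongIntegral_comp hT hC]
    simp only [← mul_def, hconj]
    exact strongIntegral_comp_mul_right hT hC v
  calc conjAverage π μ a * π v = π v * (π v⁻¹ * conjAverage π μ a * π v) := by
        rw [← mul_assoc, ← mul_assoc, ← map_mul, mul_inv_cancel, map_one, one_mul]
    _ = π v * conjAverage π μ a := by rw [hshift]

theorem norm_conjAverage_sub_le [IsProbabilityMeasure μ]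
    (hunitary : ∀ u, π u ∈ unitary (H →L[ℂ] H)) (hcont : ∀ ξ, Continuous fun u => π u ξ)
    (a : H →L[ℂ] H) : ‖conjAverage π μ a - a‖ ≤ ⨆ u, ‖a * π u - π u * a‖ := by
  have hbdd : BddAbove (Set.range fun u => ‖a * π u - π u * a‖) := by
    refine ⟨‖a‖ + ‖a‖, Set.forall_mem_range.2 fun u => (norm_sub_le _ _).trans ?_⟩
    rw [CStarRing.norm_mul_mem_unitary _ (hunitary u),
      CStarRing.norm_mem_unitary_mul _ (hunitary u)]
  refine norm_strongIntegral_sub_le (integrable_map_inv_mul_mul_map_apply hunitary hcont a)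
    fun u => ?_
  calc ‖π u⁻¹ * a * π u - a‖ = ‖π u⁻¹ * (a * π u - π u * a)‖ := by
        rw [mul_sub, ← mul_assoc, ← mul_assoc, ← map_mul, inv_mul_cancel, map_one, one_mul]
    _ = ‖a * π u - π u * a‖ := CStarRing.norm_mem_unitary_mul _ (hunitary u⁻¹)
    _ ≤ ⨆ u, ‖a * π u - π u * a‖ := le_ciSup hbdd u

theorem norm_conjAverage_le [IsProbabilityMeasure μ]
    (hunitary : ∀ u, π u ∈ unitary (H →L[ℂ] H)) (hcont : ∀ ξ, Continuous fun u => π u ξ)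
    (a : H →L[ℂ] H) : ‖conjAverage π μ a‖ ≤ ‖a‖ := by
  simpa [conjAverage] using norm_strongIntegral_sub_le (μ := μ) (A := 0)
    (integrable_map_inv_mul_mul_map_apply hunitary hcont a)
    fun u => by simpa using (norm_map_inv_mul_mul_map hunitary a u).le

theorem isPositive_conjAverage [IsFiniteMeasure μ]
    (hunitary : ∀ u, π u ∈ unitary (H →L[ℂ] H)) (hcont : ∀ ξ, Continuous fun u => π u ξ)
    {a : H →L[ℂ] H} (ha : a.IsPositive) : (conjAverage π μ a).IsPositive := by
  refine isPositive_strongIntegral (integrable_map_inv_mul_mul_map_apply hunitary hcont a)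
    (fun u => (norm_map_inv_mul_mul_map hunitary a u).le) fun u => ?_
  rw [← π.star_map_eq_map_inv (hunitary u), star_eq_adjoint]
  exact ha.adjoint_conj (π u)

end ConjAverage

theorem compact_group_conditional_expectation_general
    {H : Type*} [NormedAddCommGroup H] [InnerProductSpace ℂ H] [CompleteSpace H]
    {G : Type*} [Group G] [TopologicalSpace G] [IsTopologicalGroup G]
    [CompactSpace G] [MeasurableSpace G] [BorelSpace G]
    (π : G →* (H →L[ℂ] H))
    (hunitary : ∀ u : G, π u ∈ unitary (H →L[ℂ] H))
    -- the group is compact in the strong-* topology: the maps `u ↦ uξ` and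
    -- `u ↦ u*ξ` are continuous for every vector `ξ`
    (hcont : ∀ ξ : H, Continuous fun u : G => π u ξ)
    -- the normalized Haar measure on `G`
    (μ : Measure G) [μ.IsHaarMeasure] [IsProbabilityMeasure μ] :
    ∃ E : (H →L[ℂ] H) → (H →L[ℂ] H),
      -- `E` is the weak-operator (Pettis) integral of `u ↦ u* a u` against Haar
      (∀ a : H →L[ℂ] H, ∀ ξ η : H,
        (inner ℂ (E a ξ) η : ℂ) = ∫ u : G, (inner ℂ ((star (π u) * a * π u) ξ) η : ℂ) ∂μ) ∧
      -- `E` maps into the commutant `G'`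
      (∀ a : H →L[ℂ] H, ∀ u : G, E a * π u = π u * E a) ∧
      -- `E` is a projection onto the commutant
      (∀ b : H →L[ℂ] H, (∀ u : G, b * π u = π u * b) → E b = b) ∧
      -- `E` is contractive
      (∀ a, ‖E a‖ ≤ ‖a‖) ∧
      -- `E` is positive
      (∀ a : H →L[ℂ] H, a.IsPositive → (E a).IsPositive) ∧
      -- bimodule property over the commutant
      (∀ a b₁ b₂ : H →L[ℂ] H, (∀ u : G, b₁ * π u = π u * b₁) →
        (∀ u : G, b₂ * π u = π u * b₂) → E (b₁ * a * b₂) = b₁ * E a * b₂) ∧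
      -- the key norm estimate
      (∀ a : H →L[ℂ] H, ‖E a - a‖ ≤ ⨆ u : G, ‖a * π u - π u * a‖) :=
  ⟨conjAverage π μ, inner_conjAverage_apply hunitary hcont,
    conjAverage_mul_map_comm hunitary hcont, fun _ => conjAverage_eq_self_of_commute,
    norm_conjAverage_le hunitary hcont, fun _ => isPositive_conjAverage hunitary hcont,
    conjAverage_mul_mul hunitary hcont, norm_conjAverage_sub_le hunitary hcont⟩

theorem compact_group_conditional_expectation
    {H : Type*} [NormedAddCommGroup H] [InnerProductSpace ℂ H] [CompleteSpace H]
    {G : Type*} [Group G] [TopologicalSpace G] [IsTopologicalGroup G]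
    [CompactSpace G] [MeasurableSpace G] [BorelSpace G]
    (π : G →* (H →L[ℂ] H)) (hπ : Function.Injective π)
    (hunitary : ∀ u : G, π u ∈ unitary (H →L[ℂ] H))
    -- the group is compact in the strong-* topology: the maps `u ↦ uξ` and
    -- `u ↦ u*ξ` are continuous for every vector `ξ`
    (hcont : ∀ ξ : H, Continuous fun u : G => π u ξ)
    (hcont' : ∀ ξ : H, Continuous fun u : G => (star (π u)) ξ)
    -- the normalized Haar measure on `G`
    (μ : Measure G) [μ.IsHaarMeasure] [IsProbabilityMeasure μ] :
    ∃ E : (H →L[ℂ] H) → (H →L[ℂ] H),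
      -- `E` is the weak-operator (Pettis) integral of `u ↦ u* a u` against Haar
      (∀ a : H →L[ℂ] H, ∀ ξ η : H,
        (inner ℂ (E a ξ) η : ℂ) = ∫ u : G, (inner ℂ ((star (π u) * a * π u) ξ) η : ℂ) ∂μ) ∧
      -- `E` maps into the commutant `G'`
      (∀ a : H →L[ℂ] H, ∀ u : G, E a * π u = π u * E a) ∧
      -- `E` is a projection onto the commutant
      (∀ b : H →L[ℂ] H, (∀ u : G, b * π u = π u * b) → E b = b) ∧
      -- `E` is contractive
      (∀ a, ‖E a‖ ≤ ‖a‖) ∧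
      -- `E` is positive
      (∀ a : H →L[ℂ] H, a.IsPositive → (E a).IsPositive) ∧
      -- bimodule property over the commutant
      (∀ a b₁ b₂ : H →L[ℂ] H, (∀ u : G, b₁ * π u = π u * b₁) →
        (∀ u : G, b₂ * π u = π u * b₂) → E (b₁ * a * b₂) = b₁ * E a * b₂) ∧
      -- the key norm estimate
      (∀ a : H →L[ℂ] H, ‖E a - a‖ ≤ ⨆ u : G, ‖a * π u - π u * a‖) :=
  compact_group_conditional_expectation_general π hunitary hcont μ
end

section
/- Let H be a Hilbert space and (p_j)_{j∈J} a family of pairwise orthogonal projections on H summing strongly to 1. Define E(a) := Σ_j p_j a p_j (strong operator convergence). Then E is a conditional expectation onto the relative commutant of {p_j}, and ‖E(a) − a‖ ≤ sup{‖[a,x]‖ : x in the von Neumann algebra generated by the p_j, ‖x‖ ≤ 1} for all a ∈ B(H). -/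
/-!
For a finite `F ⊆ J`, the pinching `D_F(a)` of `a` along the partition of unity
`{p_j}_{j ∈ F} ∪ {1 - ∑_{j ∈ F} p_j}` is obtained from `a` by successively averaging `a` with
`s a s` for the symmetries `s = 2 p_j - 1`, which are unitaries of the double commutant. Hence
`D_F(a)` lies in the convex hull of the conjugates `u a u⋆` of `a` by such unitaries, and
`‖u a u⋆ - a‖ = ‖u a - a u‖`, so `‖D_F(a) - a‖` is bounded by the commutator bound. The
pinchings converge strongly to `E(a) = ∑ p_j a p_j`, which carries the bound over to `E`. The
other properties of `E` are checked term by term on the strongly convergent series.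
-/

open Filter Topology

section Pinching

variable {A J : Type*} [Ring A] {p : J → A}

def pinching (p : J → A) (F : Finset J) (a : A) : A :=
  ∑ j ∈ F, p j * a * p j + (1 - ∑ j ∈ F, p j) * a * (1 - ∑ j ∈ F, p j)

theorem pinching_empty (a : A) : pinching p ∅ a = a := by
  simp [pinching]

theorem mul_sum_eq_zero_of_notMem (horth : Pairwise fun i j => p i * p j = 0) {j : J}
    {F : Finset J} (hj : j ∉ F) : p j * ∑ i ∈ F, p i = 0 := by
  rw [Finset.mul_sum]
  exact Finset.sum_eq_zero fun i hi => horth (ne_of_mem_of_not_mem hi hj).symm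

theorem sum_mul_eq_zero_of_notMem (horth : Pairwise fun i j => p i * p j = 0) {j : J}
    {F : Finset J} (hj : j ∉ F) : (∑ i ∈ F, p i) * p j = 0 := by
  rw [Finset.sum_mul]
  exact Finset.sum_eq_zero fun i hi => horth (ne_of_mem_of_not_mem hi hj)

theorem pinching_insert [DecidableEq J] (horth : Pairwise fun i j => p i * p j = 0) {j : J}
    {F : Finset J} (hj : j ∉ F) (a : A) :
    pinching p (insert j F) a =
      p j * pinching p F a * p j + (1 - p j) * pinching p F a * (1 - p j) := by
  set q := ∑ i ∈ F, p i
  set X := ∑ i ∈ F, p i * a * p i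
  have hjX : p j * X = 0 := by
    rw [Finset.mul_sum]
    refine Finset.sum_eq_zero fun i hi => ?_
    rw [← mul_assoc, ← mul_assoc, horth (ne_of_mem_of_not_mem hi hj).symm, zero_mul, zero_mul]
  have hXj : X * p j = 0 := by
    rw [Finset.sum_mul]
    exact Finset.sum_eq_zero fun i hi => by
      rw [mul_assoc, horth (ne_of_mem_of_not_mem hi hj), mul_zero]
  have hjr : p j * (1 - q) = p j := by
    rw [mul_sub, mul_one, mul_sum_eq_zero_of_notMem horth hj, sub_zero]
  have hrj : (1 - q) * p j = p j := by
    rw [sub_mul, one_mul, sum_mul_eq_zero_of_notMem horth hj, sub_zero]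
  have hexpand : p j * (X + (1 - q) * a * (1 - q)) * p j
      + (1 - p j) * (X + (1 - q) * a * (1 - q)) * (1 - p j)
      = p j * X * p j + (p j * (1 - q)) * a * ((1 - q) * p j)
        + (X - p j * X - X * p j + p j * X * p j)
        + ((1 - q) - p j * (1 - q)) * a * ((1 - q) - (1 - q) * p j) := by
    noncomm_ring
  rw [pinching, pinching, Finset.sum_insert hj, Finset.sum_insert hj, hexpand, hjX, hXj, hjr,
    hrj, show 1 - (p j + q) = 1 - q - p j by abel]
  simp only [zero_mul, sub_zero, add_zero]
  abel

theorem isStarProjection_sum [StarRing A] (hp : ∀ j, IsStarProjection (p j))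
    (horth : Pairwise fun i j => p i * p j = 0) (F : Finset J) :
    IsStarProjection (∑ j ∈ F, p j) := by
  classical
  induction F using Finset.induction_on with
  | empty => simp
  | insert j F hj ih =>
    rw [Finset.sum_insert hj]
    exact (hp j).add ih (mul_sum_eq_zero_of_notMem horth hj)

end Pinching

section ConvexHullConj

variable {A : Type*} [Ring A] [Algebra ℝ A]

theorem mul_mul_add_one_sub_mul_mul_one_sub_eq_midpoint (e x : A) :
    e * x * e + (1 - e) * x * (1 - e) = midpoint ℝ x ((2 * e - 1) * x * (2 * e - 1)) := by
  rw [midpoint_eq_smul_add, show x + (2 * e - 1) * x * (2 * e - 1)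
      = (2 : ℝ) • (e * x * e + (1 - e) * x * (1 - e)) by rw [two_smul]; noncomm_ring,
    smul_smul]
  norm_num

variable [StarRing A]

theorem mul_mul_star_mem_convexHull_conj (M : Submonoid A) {a s y : A} (hs : s ∈ M)
    (hy : y ∈ convexHull ℝ ((fun u => u * a * star u) '' M)) :
    s * y * star s ∈ convexHull ℝ ((fun u => u * a * star u) '' M) := by
  have hmap := LinearMap.image_convexHull (LinearMap.mulLeftRight ℝ (s, star s))
    ((fun u => u * a * star u) '' M)
  refine convexHull_mono ?_ (hmap ▸ Set.mem_image_of_mem _ hy)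
  rintro _ ⟨_, ⟨u, hu, rfl⟩, rfl⟩
  refine ⟨s * u, M.mul_mem hs hu, ?_⟩
  simp only [LinearMap.mulLeftRight_apply, star_mul, mul_assoc]

theorem pinching_mem_convexHull_conj {J : Type*} {p : J → A} (M : Submonoid A)
    (hp : ∀ j, IsSelfAdjoint (p j)) (horth : Pairwise fun i j => p i * p j = 0)
    (hM : ∀ j, 2 * p j - 1 ∈ M) (a : A) (F : Finset J) :
    pinching p F a ∈ convexHull ℝ ((fun u => u * a * star u) '' M) := by
  classical
  induction F using Finset.induction_on with
  | empty =>
    refine subset_convexHull ℝ _ ⟨1, M.one_mem, ?_⟩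
    simp [pinching_empty]
  | insert j F hj ih =>
    have hs : star (2 * p j - 1) = 2 * p j - 1 := by
      simp [(hp j).star_eq, two_mul]
    rw [pinching_insert horth hj, mul_mul_add_one_sub_mul_mul_one_sub_eq_midpoint]
    refine (convex_convexHull ℝ _).midpoint_mem ih ?_
    simpa only [hs] using mul_mul_star_mem_convexHull_conj M (hM j) ih

end ConvexHullConj

theorem norm_le_one_of_mem_unitary {A : Type*} [NormedRing A] [StarRing A] [CStarRing A] {u : A}
    (hu : u ∈ unitary A) : ‖u‖ ≤ 1 := by
  rcases subsingleton_or_nontrivial A with _ | _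
  · simp [Subsingleton.elim u 0]
  · exact (CStarRing.norm_of_mem_unitary hu).le

section CStarAlgebra

variable {A : Type*} [NormedRing A] [StarRing A] [CStarRing A] [NormedAlgebra ℝ A]

theorem norm_sub_le_of_mem_convexHull_conj {S : Set A} (hS : S ⊆ unitary A) {a y : A} {c : ℝ}
    (hc : ∀ u ∈ S, ‖u * a - a * u‖ ≤ c)
    (hy : y ∈ convexHull ℝ ((fun u => u * a * star u) '' S)) : ‖y - a‖ ≤ c := by
  rw [← mem_closedBall_iff_norm]
  refine convexHull_min ?_ (convex_closedBall a c) hy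
  rintro _ ⟨u, hu, rfl⟩
  have hconj : u * a * star u - a = (u * a - a * u) * star u := by
    rw [sub_mul, mul_assoc a, Unitary.mul_star_self_of_mem (hS hu), mul_one]
  rw [mem_closedBall_iff_norm, hconj,
    CStarRing.norm_mul_mem_unitary _ (Unitary.star_mem (hS hu))]
  exact hc u hu

theorem norm_pinching_sub_le {J : Type*} {p : J → A} (hp : ∀ j, IsStarProjection (p j))
    (horth : Pairwise fun i j => p i * p j = 0) {a : A} {c : ℝ}
    (hc : ∀ x ∈ (Set.range p).centralizer.centralizer, ‖x‖ ≤ 1 → ‖a * x - x * a‖ ≤ c)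
    (F : Finset J) : ‖pinching p F a - a‖ ≤ c := by
  let M := unitary A ⊓ Submonoid.centralizer (Set.range p).centralizer
  have hM : ∀ j, 2 * p j - 1 ∈ M := by
    refine fun j => ⟨(hp j).two_mul_sub_one_mem_unitary, ?_⟩
    have hpj : p j ∈ Subring.centralizer (Set.range p).centralizer :=
      Set.subset_centralizer_centralizer ⟨j, rfl⟩
    exact (sub_mem (mul_mem (ofNat_mem _ 2) hpj) (one_mem _) :
      2 * p j - 1 ∈ Subring.centralizer _)
  refine norm_sub_le_of_mem_convexHull_conj (fun u hu => hu.1) (fun u hu => ?_)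
    (pinching_mem_convexHull_conj M (fun j => (hp j).isSelfAdjoint) horth hM a F)
  rw [norm_sub_rev]
  exact hc u hu.2 (norm_le_one_of_mem_unitary hu.1)

end CStarAlgebra

open scoped ComplexOrder in
theorem ContinuousLinearMap.isPositive_of_hasSum_apply {𝕜 E ι : Type*} [RCLike 𝕜]
    [NormedAddCommGroup E] [InnerProductSpace 𝕜 E] {T : ι → E →L[𝕜] E} {S : E →L[𝕜] E}
    (hT : ∀ i, (T i).IsPositive) (hS : ∀ x, HasSum (fun i => T i x) (S x)) : S.IsPositive := by
  refine (S.isPositive_iff).mpr ⟨fun x y => ?_, fun x => ?_⟩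
  · have hleft : HasSum (fun i => inner 𝕜 (T i x) y) (inner 𝕜 (S x) y) :=
      (hS x).mapL (innerSLFlip 𝕜 y)
    have hright : HasSum (fun i => inner 𝕜 x (T i y)) (inner 𝕜 x (S y)) :=
      (hS y).mapL (innerSL 𝕜 x)
    have hsymm : (fun i => inner 𝕜 (T i x) y) = fun i => inner 𝕜 x (T i y) :=
      funext fun i => (hT i).isSymmetric x y
    exact (hsymm ▸ hleft).unique hright
  · exact ((hS x).mapL (innerSLFlip 𝕜 x)).nonneg fun i => (hT i).inner_nonneg_left x

section Diagonal

open ContinuousLinearMap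

variable {H J : Type*} [NormedAddCommGroup H] [InnerProductSpace ℂ H] [CompleteSpace H]
  {p : J → H →L[ℂ] H}

theorem orthogonalFamily_range (hp : ∀ j, IsSelfAdjoint (p j))
    (horth : Pairwise fun i j => p i * p j = 0) :
    OrthogonalFamily ℂ (fun j => LinearMap.range (p j : H →ₗ[ℂ] H))
      fun j => (LinearMap.range (p j : H →ₗ[ℂ] H)).subtypeₗᵢ := by
  rintro i j hij ⟨_, x, rfl⟩ ⟨_, y, rfl⟩
  change inner ℂ (p i x) (p j y) = 0
  rw [← adjoint_inner_right, (hp i).adjoint_eq, ← mul_apply_eq_comp, horth hij, zero_apply,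
    inner_zero_right]

theorem norm_sum_apply_sq (hp : ∀ j, IsSelfAdjoint (p j))
    (horth : Pairwise fun i j => p i * p j = 0) (v : J → H) (F : Finset J) :
    ‖∑ j ∈ F, p j (v j)‖ ^ 2 = ∑ j ∈ F, ‖p j (v j)‖ ^ 2 :=
  (orthogonalFamily_range hp horth).norm_sum (fun j => ⟨p j (v j), v j, rfl⟩) F

theorem summable_apply_of_summable_norm_sq (hp : ∀ j, IsSelfAdjoint (p j))
    (horth : Pairwise fun i j => p i * p j = 0) {v : J → H}
    (hv : Summable fun j => ‖p j (v j)‖ ^ 2) : Summable fun j => p j (v j) :=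
  ((orthogonalFamily_range hp horth).summable_iff_norm_sq_summable
    (fun j => ⟨p j (v j), v j, rfl⟩)).mpr hv

theorem sum_norm_apply_sq_le (hp : ∀ j, IsStarProjection (p j))
    (horth : Pairwise fun i j => p i * p j = 0) (ξ : H) (F : Finset J) :
    ∑ j ∈ F, ‖p j ξ‖ ^ 2 ≤ ‖ξ‖ ^ 2 := by
  rw [← norm_sum_apply_sq (fun j => (hp j).isSelfAdjoint) horth (fun _ => ξ), ← sum_apply]
  gcongr
  simpa using le_of_opNorm_le _ ((isStarProjection_sum hp horth F).norm_le) ξ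

theorem sum_norm_diag_apply_sq_le (hp : ∀ j, IsStarProjection (p j))
    (horth : Pairwise fun i j => p i * p j = 0) (a : H →L[ℂ] H) (ξ : H) (F : Finset J) :
    ∑ j ∈ F, ‖p j (a (p j ξ))‖ ^ 2 ≤ ‖a‖ ^ 2 * ‖ξ‖ ^ 2 := calc
  _ ≤ ∑ j ∈ F, ‖a‖ ^ 2 * ‖p j ξ‖ ^ 2 := by
    refine Finset.sum_le_sum fun j _ => ?_
    rw [← mul_pow]
    gcongr
    calc ‖p j (a (p j ξ))‖ ≤ 1 * ‖a (p j ξ)‖ := le_of_opNorm_le _ ((hp j).norm_le) _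
      _ ≤ ‖a‖ * ‖p j ξ‖ := by rw [one_mul]; exact le_opNorm a _
  _ ≤ ‖a‖ ^ 2 * ‖ξ‖ ^ 2 := by
    rw [← Finset.mul_sum]
    gcongr
    exact sum_norm_apply_sq_le hp horth ξ F

theorem summable_diag_apply (hp : ∀ j, IsStarProjection (p j))
    (horth : Pairwise fun i j => p i * p j = 0) (a : H →L[ℂ] H) (ξ : H) :
    Summable fun j => p j (a (p j ξ)) :=
  summable_apply_of_summable_norm_sq (fun j => (hp j).isSelfAdjoint) horth <|
    summable_of_sum_le (fun _ => sq_nonneg _) (sum_norm_diag_apply_sq_le hp horth a ξ)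

theorem norm_tsum_diag_apply_le (hp : ∀ j, IsStarProjection (p j))
    (horth : Pairwise fun i j => p i * p j = 0) (a : H →L[ℂ] H) (ξ : H) :
    ‖∑' j, p j (a (p j ξ))‖ ≤ ‖a‖ * ‖ξ‖ := by
  refine le_of_tendsto' (summable_diag_apply hp horth a ξ).hasSum.norm fun F => ?_
  rw [← sq_le_sq₀ (norm_nonneg _) (by positivity), mul_pow,
    norm_sum_apply_sq (fun j => (hp j).isSelfAdjoint) horth]
  exact sum_norm_diag_apply_sq_le hp horth a ξ F

noncomputable def diagonalPart (hp : ∀ j, IsStarProjection (p j))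
    (horth : Pairwise fun i j => p i * p j = 0) (a : H →L[ℂ] H) : H →L[ℂ] H :=
  LinearMap.mkContinuous
    { toFun ξ := ∑' j, p j (a (p j ξ))
      map_add' ξ η := by
        simp only [map_add]
        exact (summable_diag_apply hp horth a ξ).tsum_add (summable_diag_apply hp horth a η)
      map_smul' c ξ := by
        simp only [map_smul, RingHom.id_apply]
        exact (summable_diag_apply hp horth a ξ).tsum_const_smul c }
    ‖a‖ (norm_tsum_diag_apply_le hp horth a)

variable (hp : ∀ j, IsStarProjection (p j)) (horth : Pairwise fun i j => p i * p j = 0)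

theorem hasSum_diagonalPart_apply (a : H →L[ℂ] H) (ξ : H) :
    HasSum (fun j => p j (a (p j ξ))) (diagonalPart hp horth a ξ) :=
  (summable_diag_apply hp horth a ξ).hasSum

theorem norm_diagonalPart_le (a : H →L[ℂ] H) : ‖diagonalPart hp horth a‖ ≤ ‖a‖ :=
  LinearMap.mkContinuous_norm_le _ (norm_nonneg a) _

theorem diagonalPart_mem_centralizer (a : H →L[ℂ] H) :
    diagonalPart hp horth a ∈ (Set.range p).centralizer := by
  rintro _ ⟨k, rfl⟩
  ext ξ
  have hkk : ∀ η, p k (p k η) = p k η := fun η => congr($((hp k).isIdempotentElem.eq) η)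
  have hzero : ∀ j ≠ k, ∀ η, p j (p k η) = 0 ∧ p k (p j η) = 0 := fun j hj η =>
    ⟨congr($(horth hj) η), congr($(horth hj.symm) η)⟩
  calc p k (diagonalPart hp horth a ξ) = p k (a (p k ξ)) := by
        refine ((hasSum_diagonalPart_apply hp horth a ξ).mapL (p k)).unique ?_
        convert hasSum_single (f := fun j => p k (p j (a (p j ξ)))) k
          fun j hj => (hzero j hj _).2 using 1
        rw [hkk]
    _ = diagonalPart hp horth a (p k ξ) := by
        refine ((hasSum_diagonalPart_apply hp horth a (p k ξ))).unique ?_ |>.symm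
        convert hasSum_single (f := fun j => p j (a (p j (p k ξ)))) k
          fun j hj => by simp [(hzero j hj ξ).1] using 1
        rw [hkk]

theorem diagonalPart_eq_self_of_mem_centralizer (hone : ∀ ξ : H, HasSum (fun j => p j ξ) ξ)
    {b : H →L[ℂ] H} (hb : b ∈ (Set.range p).centralizer) : diagonalPart hp horth b = b := by
  ext ξ
  have hcompress : ∀ j, p j (b (p j ξ)) = b (p j ξ) := fun j => by
    rw [← mul_apply_eq_comp, hb (p j) ⟨j, rfl⟩, mul_apply_eq_comp,
      ← mul_apply_eq_comp (p j), (hp j).isIdempotentElem.eq]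
  refine (hasSum_diagonalPart_apply hp horth b ξ).unique ?_
  simpa only [hcompress] using (hone ξ).mapL b

theorem diagonalPart_mul_mul (a : H →L[ℂ] H) {d₁ d₂ : H →L[ℂ] H}
    (hd₁ : d₁ ∈ (Set.range p).centralizer) (hd₂ : d₂ ∈ (Set.range p).centralizer) :
    diagonalPart hp horth (d₁ * a * d₂) = d₁ * diagonalPart hp horth a * d₂ := by
  ext ξ
  have hcompress : ∀ j, p j ((d₁ * a * d₂) (p j ξ)) = d₁ (p j (a (p j (d₂ ξ)))) := fun j => by
    have := calc p j * (d₁ * a * d₂) * p j = p j * d₁ * a * (d₂ * p j) := by noncomm_ring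
      _ = d₁ * (p j * a * p j) * d₂ := by
        rw [hd₁ (p j) ⟨j, rfl⟩, ← hd₂ (p j) ⟨j, rfl⟩]; noncomm_ring
    exact congr($this ξ)
  rw [mul_apply_eq_comp, mul_apply_eq_comp]
  refine (hasSum_diagonalPart_apply hp horth _ ξ).unique ?_
  simpa only [hcompress] using (hasSum_diagonalPart_apply hp horth a (d₂ ξ)).mapL d₁

theorem ContinuousLinearMap.IsPositive.diagonalPart {a : H →L[ℂ] H} (ha : a.IsPositive) :
    (diagonalPart hp horth a).IsPositive :=
  isPositive_of_hasSum_apply (T := fun j => p j ∘L a ∘L p j)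
    (fun j => by simpa only [(hp j).isSelfAdjoint.adjoint_eq] using ha.conj_adjoint (p j))
    (hasSum_diagonalPart_apply hp horth a)

theorem tendsto_pinching_apply (hone : ∀ ξ : H, HasSum (fun j => p j ξ) ξ)
    (a : H →L[ℂ] H) (ξ : H) :
    Tendsto (fun F => pinching p F a ξ) atTop (𝓝 (diagonalPart hp horth a ξ)) := by
  set r : Finset J → H →L[ℂ] H := fun F => 1 - ∑ j ∈ F, p j
  have hr : Tendsto (fun F => r F ξ) atTop (𝓝 0) := by
    simpa [r, sum_apply] using (tendsto_const_nhds (x := ξ)).sub (hone ξ)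
  have htail : Tendsto (fun F => r F (a (r F ξ))) atTop (𝓝 0) := by
    refine squeeze_zero_norm (fun F => ?_) (by simpa using hr.norm.const_mul ‖a‖)
    calc ‖r F (a (r F ξ))‖ ≤ 1 * ‖a (r F ξ)‖ :=
          le_of_opNorm_le _ (isStarProjection_sum hp horth F).one_sub.norm_le _
      _ ≤ ‖a‖ * ‖r F ξ‖ := by rw [one_mul]; exact le_opNorm a _
  simpa [pinching, r, sum_apply] using
    Tendsto.add (hasSum_diagonalPart_apply hp horth a ξ) htail

theorem norm_diagonalPart_sub_le (hone : ∀ ξ : H, HasSum (fun j => p j ξ) ξ) {a : H →L[ℂ] H}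
    {c : ℝ} (hc : ∀ x ∈ (Set.range p).centralizer.centralizer, ‖x‖ ≤ 1 → ‖a * x - x * a‖ ≤ c) :
    ‖diagonalPart hp horth a - a‖ ≤ c := by
  have hbound := norm_pinching_sub_le hp horth hc
  have hc0 : 0 ≤ c := by simpa [pinching_empty] using hbound ∅
  refine opNorm_le_bound _ hc0 fun ξ => ?_
  refine le_of_tendsto' ((tendsto_pinching_apply hp horth hone a ξ).sub_const (a ξ)).norm
    fun F => ?_
  exact le_of_opNorm_le _ (hbound F) ξ

end Diagonal

theorem diagonal_conditional_expectation
    {H : Type*} [NormedAddCommGroup H] [InnerProductSpace ℂ H] [CompleteSpace H]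
    {J : Type*} (p : J → H →L[ℂ] H)
    (hidem : ∀ j, IsIdempotentElem (p j)) (hsa : ∀ j, IsSelfAdjoint (p j))
    (horth : ∀ j j', j ≠ j' → p j * p j' = 0)
    (hone : ∀ ξ : H, HasSum (fun j => p j ξ) ξ) :
    ∃ E : (H →L[ℂ] H) → (H →L[ℂ] H),
      -- `E a = Σ_j p_j a p_j`, converging in the strong operator topology
      (∀ a, ∀ ξ : H, HasSum (fun j => p j (a (p j ξ))) (E a ξ)) ∧
      -- `E` maps into the relative commutant of the family `{p_j}`
      (∀ a, E a ∈ Set.centralizer (Set.range p)) ∧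
      -- `E` is a projection onto the relative commutant
      (∀ b ∈ Set.centralizer (Set.range p), E b = b) ∧
      -- `E` is contractive
      (∀ a, ‖E a‖ ≤ ‖a‖) ∧
      -- `E` is positive
      (∀ a : H →L[ℂ] H, a.IsPositive → (E a).IsPositive) ∧
      -- bimodule property over the relative commutant
      (∀ a, ∀ d₁ ∈ Set.centralizer (Set.range p),
        ∀ d₂ ∈ Set.centralizer (Set.range p), E (d₁ * a * d₂) = d₁ * E a * d₂) ∧
      -- `‖E(a) − a‖` is dominated by the commutators with the unit ball of the
      -- von Neumann algebra generated by the `p_j` (the double commutant)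
      (∀ a : H →L[ℂ] H, ∀ c : ℝ,
        (∀ x ∈ Set.centralizer (Set.centralizer (Set.range p)),
          ‖x‖ ≤ 1 → ‖a * x - x * a‖ ≤ c) → ‖E a - a‖ ≤ c) := by
  have hp : ∀ j, IsStarProjection (p j) := fun j => ⟨hidem j, hsa j⟩
  have horth' : Pairwise fun i j => p i * p j = 0 := fun i j => horth i j
  exact ⟨diagonalPart hp horth', hasSum_diagonalPart_apply hp horth',
    diagonalPart_mem_centralizer hp horth',
    fun _ => diagonalPart_eq_self_of_mem_centralizer hp horth' hone,
    norm_diagonalPart_le hp horth',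
    fun _ ha => ha.diagonalPart hp horth',
    fun a _ hd₁ _ hd₂ => diagonalPart_mul_mul hp horth' a hd₁ hd₂,
    fun _ _ hc => norm_diagonalPart_sub_le hp horth' hone hc⟩
end

section
/- Let X be a proper metric space, H an X-module, and suppose b ∈ B(H) satisfies: for every ε > 0 there exists L > 0 such that ‖[b,f]‖ < ε for every L-Lipschitz contraction f ∈ C_b(X). Then b is quasi-local: for every ε > 0 there exists R > 0 such that ‖f b f'‖ < ε whenever f, f' ∈ C_b(X) are contractions whose supports are at distance greater than R. -/
open BoundedContinuousFunction

theorem lipschitz_commutation_implies_quasi_local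
    {X : Type*} [MetricSpace X] [ProperSpace X]
    {H : Type*} [NormedAddCommGroup H] [InnerProductSpace ℂ H] [CompleteSpace H]
    -- an `X`-module structure: a unital injective *-representation of `C_b(X)`
    (π : (X →ᵇ ℂ) →⋆ₐ[ℂ] (H →L[ℂ] H)) (hπ : Function.Injective π)
    (b : H →L[ℂ] H)
    (hcomm : ∀ ε > (0 : ℝ), ∃ L > (0 : ℝ), ∀ f : X →ᵇ ℂ, ‖f‖ ≤ 1 →
      (∀ x y : X, ‖f x - f y‖ ≤ L * dist x y) → ‖b * π f - π f * b‖ < ε) :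
    -- `b` is quasi-local
    ∀ ε > (0 : ℝ), ∃ R > (0 : ℝ), ∀ f f' : X →ᵇ ℂ, ‖f‖ ≤ 1 → ‖f'‖ ≤ 1 →
      (∀ x y : X, f x ≠ 0 → f' y ≠ 0 → R < dist x y) →
      ‖π f * b * π f'‖ < ε := by
  intro ε hε
  obtain ⟨L, hL, hc⟩ := hcomm ε hε
  refine ⟨1 / L, by positivity, ?_⟩
  intro f f' hf hf' hdisj
  by_cases hf0 : f = 0
  · simpa [hf0] using hε
  · set S : Set X := {x | f x ≠ 0} with hSdef
    have hSne : S.Nonempty := by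
      by_contra h
      apply hf0
      ext x
      have hx : x ∉ S := fun hx => h ⟨x, hx⟩
      simpa [hSdef] using hx
    set gr : X → ℝ := fun x => min 1 (L * Metric.infDist x S) with hgrdef
    have hgr0 : ∀ x, 0 ≤ gr x := fun x =>
      le_min zero_le_one (mul_nonneg hL.le Metric.infDist_nonneg)
    have hgr1 : ∀ x, gr x ≤ 1 := fun x => min_le_left _ _
    have hgrlip : ∀ x y : X, |gr x - gr y| ≤ L * dist x y := by
      intro x y
      have h1 : |gr x - gr y| ≤
          max |(1:ℝ) - 1| |L * Metric.infDist x S - L * Metric.infDist y S| :=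
        abs_min_sub_min_le_max _ _ _ _
      have h2 : |L * Metric.infDist x S - L * Metric.infDist y S| ≤ L * dist x y := by
        rw [← mul_sub, abs_mul, abs_of_pos hL]
        refine mul_le_mul_of_nonneg_left ?_ hL.le
        rw [abs_sub_le_iff]
        constructor
        · have := Metric.infDist_le_infDist_add_dist (x := x) (y := y) (s := S)
          linarith
        · have := Metric.infDist_le_infDist_add_dist (x := y) (y := x) (s := S)
          rw [dist_comm] at this
          linarith
      calc |gr x - gr y| ≤ _ := h1
        _ ≤ L * dist x y := by
            simpa using h2
    have hgcont : Continuous fun x => ((gr x : ℝ) : ℂ) :=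
      Complex.continuous_ofReal.comp
        (continuous_const.min (continuous_const.mul (Metric.continuous_infDist_pt S)))
    set g : X →ᵇ ℂ :=
      BoundedContinuousFunction.ofNormedAddCommGroup (fun x => ((gr x : ℝ) : ℂ)) hgcont 1
        (fun x => by
          rw [Complex.norm_real, Real.norm_eq_abs, abs_of_nonneg (hgr0 x)]
          exact hgr1 x) with hgdef
    have hgapp : ∀ x, g x = ((gr x : ℝ) : ℂ) := fun x => rfl
    have hgle : ‖g‖ ≤ 1 :=
      BoundedContinuousFunction.norm_ofNormedAddCommGroup_le _ zero_le_one _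
    have hglip : ∀ x y : X, ‖g x - g y‖ ≤ L * dist x y := by
      intro x y
      rw [hgapp, hgapp, ← Complex.ofReal_sub, Complex.norm_real]
      exact hgrlip x y
    have hcg := hc g hgle hglip
    have hfg : f * g = 0 := by
      ext x
      by_cases hx : f x = 0
      · simp [hx]
      · have hxS : x ∈ S := hx
        have : gr x = 0 := by
          simp [hgrdef, Metric.infDist_zero_of_mem hxS]
        simp [hgapp, this]
    have hgf' : g * f' = f' := by
      ext y
      by_cases hy : f' y = 0
      · simp [hy]
      · have hinf : 1 / L ≤ Metric.infDist y S := by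
          by_contra h
          push_neg at h
          obtain ⟨z, hzS, hz⟩ := (Metric.infDist_lt_iff hSne).mp h
          have := hdisj z y hzS hy
          rw [dist_comm] at this
          linarith
        have h1 : (1:ℝ) ≤ L * Metric.infDist y S := by
          have := mul_le_mul_of_nonneg_left hinf hL.le
          rwa [mul_one_div, div_self hL.ne'] at this
        have : gr y = 1 := min_eq_left h1
        simp [hgapp, this]
    have h1 : π f * π g = 0 := by rw [← map_mul, hfg, map_zero]
    have h2 : π g * π f' = π f' := by rw [← map_mul, hgf']
    have key : π f * b * π f' = π f * (b * π g - π g * b) * π f' := by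
      have expand : π f * (b * π g - π g * b) * π f' =
          π f * b * (π g * π f') - (π f * π g) * (b * π f') := by noncomm_ring
      rw [expand, h1, h2, zero_mul, sub_zero]
    have hπf : ‖π f‖ ≤ 1 := (NonUnitalStarAlgHom.norm_apply_le π f).trans hf
    have hπf' : ‖π f'‖ ≤ 1 := (NonUnitalStarAlgHom.norm_apply_le π f').trans hf'
    calc ‖π f * b * π f'‖ = ‖π f * (b * π g - π g * b) * π f'‖ := by rw [key]
      _ ≤ ‖π f * (b * π g - π g * b)‖ * ‖π f'‖ := norm_mul_le _ _
      _ ≤ ‖π f‖ * ‖b * π g - π g * b‖ * ‖π f'‖ :=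
          mul_le_mul_of_nonneg_right (norm_mul_le _ _) (norm_nonneg _)
      _ ≤ 1 * ‖b * π g - π g * b‖ * 1 := by
          gcongr <;> first | exact hπf | exact hπf' | exact norm_nonneg _
      _ = ‖b * π g - π g * b‖ := by ring
      _ < ε := hcg
end

section
/- Let X be a metric space with asymptotic dimension at most d. Then for every n there is a partition of unity (e_j^{(i)})_{i=0,…,d; j∈J} in C_b(X) such that for each i the family (e_j^{(i)})_{j∈J} has pairwise disjoint supports, each e_j^{(i)} is (1/n)-Lipschitz, the supports have uniformly bounded diameter S(n), and for every ε > 0 any (ε/S(n))-Lipschitz bounded function f satisfies ‖f − Σ_{i=0}^{d} Σ_{j} f(x_j^{(i)}) e_j^{(i)}‖ ≤ ε, where x_j^{(i)} is any point in the support of e_j^{(i)}. -/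
set_option linter.unusedSectionVars false
set_option linter.unusedVariables false


lemma max0_lip (a b : ℝ) : |max 0 a - max 0 b| ≤ |a - b| := by
  rw [max_comm 0 a, max_comm 0 b]; exact abs_max_sub_max_le_abs a b 0

lemma min1_eq (x : ℝ) : min 1 x = 1 - max 0 (1 - x) := by
  rcases le_total x 1 with h | h
  · rw [min_eq_right h, max_eq_right (by linarith)]; ring
  · rw [min_eq_left h, max_eq_left (by linarith)]; ring

lemma min1_lip (a b : ℝ) : |min 1 a - min 1 b| ≤ |a - b| := by
  rw [min1_eq, min1_eq]
  have := max0_lip (1 - a) (1 - b)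
  have h2 : |(1 - a) - (1 - b)| = |a - b| := by rw [show (1-a) - (1-b) = -(a-b) by ring, abs_neg]
  calc |1 - max 0 (1 - a) - (1 - max 0 (1 - b))| = |max 0 (1-b) - max 0 (1-a)| := by ring_nf
    _ ≤ |(1-b) - (1-a)| := max0_lip _ _
    _ = |b - a| := by rw [show (1-b) - (1-a) = -(b-a) by ring, abs_neg]
    _ = |a - b| := abs_sub_comm b a

lemma prod_lip (a b c dd : ℝ) (hb : 0 ≤ b) (hb1 : b ≤ 1) (hc : 0 ≤ c) (hc1 : c ≤ 1) :
    |a * b - c * dd| ≤ |a - c| + |b - dd| := by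
  have : a * b - c * dd = (a - c) * b + c * (b - dd) := by ring
  rw [this]
  calc |(a - c) * b + c * (b - dd)| ≤ |(a - c) * b| + |c * (b - dd)| := abs_add_le _ _
    _ = |a - c| * |b| + |c| * |b - dd| := by rw [abs_mul, abs_mul]
    _ ≤ |a - c| * 1 + 1 * |b - dd| := by
        gcongr
        · rw [abs_of_nonneg hb]; exact hb1
        · rw [abs_of_nonneg hc]; exact hc1
    _ = |a - c| + |b - dd| := by ring

lemma div_lip (gx gy Fx Fy A B : ℝ) (hFx : 1/2 ≤ Fx) (hFy : 1/2 ≤ Fy)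
    (hgy : 0 ≤ gy) (hgyF : gy ≤ Fy)
    (h1 : |gx - gy| ≤ A) (h2 : |Fx - Fy| ≤ B) :
    |gx / Fx - gy / Fy| ≤ 2 * A + 2 * B := by
  have hFx0 : 0 < Fx := by linarith
  have hFy0 : 0 < Fy := by linarith
  have e1 : |gx / Fx - gy / Fx| ≤ 2 * A := by
    rw [div_sub_div_same, abs_div, abs_of_pos hFx0]
    rw [div_le_iff₀ hFx0]
    calc |gx - gy| ≤ A := h1
      _ = (2 * A) * (1/2) := by ring
      _ ≤ (2 * A) * Fx := by
          have hA : 0 ≤ A := le_trans (abs_nonneg _) h1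
          gcongr
  have e2 : |gy / Fx - gy / Fy| ≤ 2 * B := by
    have : gy / Fx - gy / Fy = gy * (Fy - Fx) / (Fx * Fy) := by
      field_simp
    rw [this, abs_div, abs_mul, abs_of_pos (mul_pos hFx0 hFy0)]
    rw [div_le_iff₀ (mul_pos hFx0 hFy0)]
    have hB : 0 ≤ B := le_trans (abs_nonneg _) h2
    calc |gy| * |Fy - Fx| ≤ Fy * B := by
          apply mul_le_mul _ _ (abs_nonneg _) (le_of_lt hFy0)
          · rw [abs_of_nonneg hgy]; exact hgyF
          · rw [abs_sub_comm]; exact h2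
      _ = (2*B) * ((1/2) * Fy) := by ring
      _ ≤ (2*B) * (Fx * Fy) := by gcongr
  calc |gx / Fx - gy / Fy| ≤ |gx/Fx - gy/Fx| + |gy/Fx - gy/Fy| := abs_sub_le _ _ _
    _ ≤ 2*A + 2*B := add_le_add e1 e2

lemma infDist_lip {X : Type*} [MetricSpace X] (s : Set X) (x y : X) :
    |Metric.infDist x s - Metric.infDist y s| ≤ dist x y := by
  rw [abs_sub_le_iff]
  constructor
  · have := Metric.infDist_le_infDist_add_dist (x := x) (y := y) (s := s); linarith
  · have := Metric.infDist_le_infDist_add_dist (x := y) (y := x) (s := s)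
    rw [dist_comm] at this; linarith

namespace AsdimPf

variable {X : Type*} [MetricSpace X] {d : ℕ} {J₀ : Type}

def K (U : Fin (d+1) → J₀ → Set X) : Type := {p : Fin (d+1) × J₀ // (U p.1 p.2).Nonempty}

noncomputable def xi (U : Fin (d+1) → J₀ → Set X) (q : K U) : X := q.2.some

lemma xi_mem (U : Fin (d+1) → J₀ → Set X) (q : K U) : xi U q ∈ U q.1.1 q.1.2 := q.2.some_mem

variable (U : Fin (d+1) → J₀ → Set X) (r : ℝ) (istar : Fin (d+1))

def Kc (i : Fin (d+1)) : Type := {q : K U // q.1.1 = i}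

noncomputable def beta (q : K U) (x : X) : ℝ :=
  max 0 (1 - (4/r) * Metric.infDist x (U q.1.1 q.1.2))

noncomputable def Zs : Set X := Set.range (fun w : Kc U istar => xi U w.1)

noncomputable def Dz (x : X) : ℝ := Metric.infDist x (Zs U istar)

noncomputable def mu (x : X) : ℝ := min 1 (max 0 (Dz U istar x / (r/100) - 4))

noncomputable def Pw (w : Kc U istar) (x : X) : ℝ :=
  max 0 (1 - dist x (xi U w.1) / (4*(r/100)))

noncomputable def Bf (q : K U) : X → ℝ :=
  if q.1.1 = istar then beta U r q else fun x => beta U r q x * mu U r istar x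

def Kc' (i : Fin (d+1)) : Type := {q : K U // q.1.1 = i ∧ ∃ x, Bf U r istar q x ≠ 0}

def Cc (i : Fin (d+1)) : Type := Kc' U r istar i ⊕ {w : Kc U istar // i ≠ istar}

noncomputable def slotF (i : Fin (d+1)) (c : Cc U r istar i) : X → ℝ :=
  Sum.elim (fun q => Bf U r istar q.1) (fun w => Pw U r istar w.1) c

noncomputable def xptF (i : Fin (d+1)) (c : Cc U r istar i) : X :=
  Sum.elim (fun q => q.2.2.choose) (fun w => xi U w.1.1) c

section Basic

variable (hr : 0 < r)
include hr

lemma beta_nonneg (q : K U) (x : X) : 0 ≤ beta U r q x := le_max_left _ _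

lemma beta_le_one (q : K U) (x : X) : beta U r q x ≤ 1 := by
  apply max_le (by norm_num)
  have h1 : 0 ≤ (4/r) * Metric.infDist x (U q.1.1 q.1.2) :=
    mul_nonneg (by positivity) Metric.infDist_nonneg
  linarith

lemma beta_ne_zero (q : K U) (x : X) (h : beta U r q x ≠ 0) :
    Metric.infDist x (U q.1.1 q.1.2) < r/4 := by
  unfold beta at h
  rcases le_or_gt (1 - (4/r) * Metric.infDist x (U q.1.1 q.1.2)) 0 with hc | hc
  · exact absurd (max_eq_left hc) h
  · have h4r : (0:ℝ) < 4/r := by positivity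
    have hlt : (4/r) * Metric.infDist x (U q.1.1 q.1.2) < 1 := by linarith
    have := (lt_div_iff₀' h4r).2 hlt
    calc Metric.infDist x (U q.1.1 q.1.2) < 1 / (4/r) := this
      _ = r/4 := by field_simp

lemma beta_lower (q : K U) (x : X) :
    1 - (4/r) * Metric.infDist x (U q.1.1 q.1.2) ≤ beta U r q x := le_max_right _ _

lemma beta_mem_one (q : K U) (x : X) (hx : x ∈ U q.1.1 q.1.2) : beta U r q x = 1 := by
  unfold beta
  rw [Metric.infDist_zero_of_mem hx]
  norm_num

lemma mu_nonneg (x : X) : 0 ≤ mu U r istar x :=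
  le_min (by norm_num) (le_max_left _ _)

lemma mu_le_one (x : X) : mu U r istar x ≤ 1 := min_le_left _ _

lemma mu_ne_zero (x : X) (h : mu U r istar x ≠ 0) : 4*(r/100) < Dz U istar x := by
  by_contra hc
  push_neg at hc
  apply h
  unfold mu
  have h100 : (0:ℝ) < r/100 := by positivity
  have : Dz U istar x / (r/100) - 4 ≤ 0 := by
    have := (div_le_iff₀ h100).2 (by linarith : Dz U istar x ≤ 4 * (r/100))
    linarith
  rw [max_eq_left this]
  simp

lemma mu_eq_one (x : X) (h : 5*(r/100) ≤ Dz U istar x) : mu U r istar x = 1 := by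
  unfold mu
  have h100 : (0:ℝ) < r/100 := by positivity
  have h5 : (5:ℝ) ≤ Dz U istar x / (r/100) := by
    rw [le_div_iff₀ h100]; linarith
  have : (1:ℝ) ≤ Dz U istar x / (r/100) - 4 := by linarith
  rw [min_eq_left (le_trans this (le_max_right _ _))]

lemma Pw_nonneg (w : Kc U istar) (x : X) : 0 ≤ Pw U r istar w x := le_max_left _ _

lemma Pw_le_one (w : Kc U istar) (x : X) : Pw U r istar w x ≤ 1 := by
  apply max_le (by norm_num)
  have : 0 ≤ dist x (xi U w.1) / (4*(r/100)) := by positivity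
  linarith

lemma Pw_ne_zero (w : Kc U istar) (x : X) (h : Pw U r istar w x ≠ 0) :
    dist x (xi U w.1) < 4*(r/100) := by
  unfold Pw at h
  rcases le_or_gt (1 - dist x (xi U w.1) / (4*(r/100))) 0 with hc | hc
  · exact absurd (max_eq_left hc) h
  · rw [sub_pos, div_lt_one (by positivity)] at hc
    exact hc

lemma Pw_self (w : Kc U istar) : Pw U r istar w (xi U w.1) = 1 := by
  unfold Pw
  rw [dist_self]
  norm_num

lemma Bf_nonneg (q : K U) (x : X) : 0 ≤ Bf U r istar q x := by
  unfold Bf; split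
  · exact beta_nonneg U r hr q x
  · exact mul_nonneg (beta_nonneg U r hr q x) (mu_nonneg U r istar hr x)

lemma Bf_le_one (q : K U) (x : X) : Bf U r istar q x ≤ 1 := by
  unfold Bf; split
  · exact beta_le_one U r hr q x
  · exact mul_le_one₀ (beta_le_one U r hr q x) (mu_nonneg U r istar hr x) (mu_le_one U r istar hr x)

lemma Bf_ne_zero_beta (q : K U) (x : X) (h : Bf U r istar q x ≠ 0) : beta U r q x ≠ 0 := by
  unfold Bf at h; revert h; split
  · exact id
  · intro h hb; exact h (by simp [hb])

end Basic

section Geom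

variable (hr : 0 < r)
variable (hdisj : ∀ i, ∀ j j', j ≠ j' → ∀ x ∈ U i j, ∀ y ∈ U i j', r < dist x y)
include hr hdisj

lemma color_uniq (q q' : K U) (hc : q.1.1 = q'.1.1) (hne : q ≠ q') (x : X)
    (h1 : beta U r q x ≠ 0) (h2 : beta U r q' x ≠ 0) : False := by
  have i1 := beta_ne_zero U r hr q x h1
  have i2 := beta_ne_zero U r hr q' x h2
  obtain ⟨y, hy, hdy⟩ := (Metric.infDist_lt_iff q.2).1 i1
  obtain ⟨y', hy', hdy'⟩ := (Metric.infDist_lt_iff q'.2).1 i2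
  have hj : q.1.2 ≠ q'.1.2 := by
    intro hj
    apply hne
    apply Subtype.ext
    exact Prod.ext hc hj
  have hy'2 : y' ∈ U q.1.1 q'.1.2 := by rw [hc]; exact hy'
  have := hdisj q.1.1 q.1.2 q'.1.2 hj y hy y' hy'2
  have : dist y y' ≤ dist y x + dist x y' := dist_triangle _ _ _
  have hxy : dist y x = dist x y := dist_comm _ _
  linarith [hdisj q.1.1 q.1.2 q'.1.2 hj y hy y' hy'2]

lemma bull_uniq (w w' : Kc U istar) (hne : w ≠ w') (x : X)
    (h1 : Pw U r istar w x ≠ 0) (h2 : Pw U r istar w' x ≠ 0) : False := by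
  have i1 := Pw_ne_zero U r istar hr w x h1
  have i2 := Pw_ne_zero U r istar hr w' x h2
  have hcol : w.1.1.1 = w'.1.1.1 := by rw [w.2, w'.2]
  have hq : w.1 ≠ w'.1 := fun h => hne (Subtype.ext h)
  have hj : w.1.1.2 ≠ w'.1.1.2 := by
    intro hj
    exact hq (Subtype.ext (Prod.ext hcol hj))
  have hmem' : xi U w'.1 ∈ U w.1.1.1 w'.1.1.2 := by rw [hcol]; exact xi_mem U w'.1
  have hd := hdisj w.1.1.1 w.1.1.2 w'.1.1.2 hj (xi U w.1) (xi_mem U w.1) (xi U w'.1) hmem'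
  have ht : dist (xi U w.1) (xi U w'.1) ≤ dist x (xi U w.1) + dist x (xi U w'.1) := by
    rw [dist_comm x (xi U w.1)]; exact dist_triangle _ _ _
  linarith

lemma BP_disj (q : K U) (hq : q.1.1 ≠ istar) (w : Kc U istar) (x : X)
    (h1 : Bf U r istar q x ≠ 0) (h2 : Pw U r istar w x ≠ 0) : False := by
  have hmu : mu U r istar x ≠ 0 := by
    unfold Bf at h1
    rw [if_neg hq] at h1
    exact fun h => h1 (by simp [h])
  have i1 := mu_ne_zero U r istar hr x hmu
  have i2 := Pw_ne_zero U r istar hr w x h2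
  have : Dz U istar x ≤ dist x (xi U w.1) :=
    Metric.infDist_le_dist_of_mem ⟨w, rfl⟩
  linarith

end Geom

section Lip

variable (hr : 0 < r)
include hr

lemma beta_lip (q : K U) (x y : X) : |beta U r q x - beta U r q y| ≤ (4/r) * dist x y := by
  unfold beta
  refine le_trans (max0_lip _ _) ?_
  have : (1 - 4/r * Metric.infDist x (U q.1.1 q.1.2)) - (1 - 4/r * Metric.infDist y (U q.1.1 q.1.2))
      = (4/r) * (Metric.infDist y (U q.1.1 q.1.2) - Metric.infDist x (U q.1.1 q.1.2)) := by ring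
  rw [this, abs_mul, abs_of_pos (by positivity : (0:ℝ) < 4/r)]
  gcongr
  rw [abs_sub_comm]
  exact infDist_lip _ _ _

lemma mu_lip (x y : X) : |mu U r istar x - mu U r istar y| ≤ (100/r) * dist x y := by
  unfold mu
  refine le_trans (min1_lip _ _) (le_trans (max0_lip _ _) ?_)
  have : Dz U istar x / (r/100) - 4 - (Dz U istar y / (r/100) - 4)
      = (Dz U istar x - Dz U istar y) / (r/100) := by ring
  rw [this, abs_div, abs_of_pos (by positivity : (0:ℝ) < r/100)]
  rw [div_le_iff₀ (by positivity : (0:ℝ) < r/100)]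
  calc |Dz U istar x - Dz U istar y| ≤ dist x y := infDist_lip _ _ _
    _ = (100/r) * dist x y * (r/100) := by field_simp
  
lemma Pw_lip (w : Kc U istar) (x y : X) :
    |Pw U r istar w x - Pw U r istar w y| ≤ (25/r) * dist x y := by
  unfold Pw
  refine le_trans (max0_lip _ _) ?_
  have : (1 - dist x (xi U w.1) / (4*(r/100))) - (1 - dist y (xi U w.1) / (4*(r/100)))
      = (dist y (xi U w.1) - dist x (xi U w.1)) / (4*(r/100)) := by ring
  rw [this, abs_div, abs_of_pos (by positivity : (0:ℝ) < 4*(r/100))]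
  rw [div_le_iff₀ (by positivity : (0:ℝ) < 4*(r/100))]
  calc |dist y (xi U w.1) - dist x (xi U w.1)| ≤ dist y x := abs_dist_sub_le _ _ _
    _ = dist x y := dist_comm _ _
    _ = (25/r) * dist x y * (4*(r/100)) := by field_simp; ring
  
lemma Bf_lip (q : K U) (x y : X) : |Bf U r istar q x - Bf U r istar q y| ≤ (104/r) * dist x y := by
  unfold Bf
  split
  · refine le_trans (beta_lip U r hr q x y) ?_
    have h4 : (4:ℝ)/r ≤ 104/r := by
      rw [div_le_div_iff_of_pos_right hr] <;> norm_num
    exact mul_le_mul_of_nonneg_right h4 dist_nonneg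
  · refine le_trans (prod_lip _ _ _ _ (mu_nonneg U r istar hr x) (mu_le_one U r istar hr x)
      (beta_nonneg U r hr q y) (beta_le_one U r hr q y)) ?_
    have h1 := beta_lip U r hr q x y
    have h2 := mu_lip U r istar hr x y
    calc |beta U r q x - beta U r q y| + |mu U r istar x - mu U r istar y|
        ≤ (4/r) * dist x y + (100/r) * dist x y := add_le_add h1 h2
      _ = (104/r) * dist x y := by ring

end Lip

lemma core {X : Type*} [MetricSpace X] {d : ℕ} {J₀ : Type} (n : ℕ)
    (U : Fin (d+1) → J₀ → Set X) (S₂ : ℝ) (r : ℝ) (hr : 0 < r)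
    (hrn : 208/r + 832*((d:ℝ)+1)/r ≤ 1/(n:ℝ)) (hS₂ : 0 ≤ S₂)
    (hcov : ∀ x : X, ∃ i j, x ∈ U i j)
    (hdisj : ∀ i, ∀ j j', j ≠ j' → ∀ x ∈ U i j, ∀ y ∈ U i j', r < dist x y)
    (hdiam : ∀ i j, ∀ x ∈ U i j, ∀ y ∈ U i j, dist x y ≤ S₂)
    (hKinf : Infinite (K U)) :
    ∃ (J : Type) (e : Fin (d + 1) → J → X → ℝ) (xpt : Fin (d + 1) → J → X)
        (S : ℝ), 0 ≤ S ∧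
        (∀ i j x, 0 ≤ e i j x) ∧
        (∀ x : X, HasSum (fun p : Fin (d + 1) × J => e p.1 p.2 x) 1) ∧
        (∀ i, ∀ j j', j ≠ j' → ∀ x : X, e i j x = 0 ∨ e i j' x = 0) ∧
        (∀ i j, ∀ x y : X, |e i j x - e i j y| ≤ (1 / (n : ℝ)) * dist x y) ∧
        (∀ i j, ∀ x y : X, e i j x ≠ 0 → e i j y ≠ 0 → dist x y ≤ S) ∧
        (∀ i j, e i j (xpt i j) ≠ 0) ∧
        (∀ ε > (0 : ℝ), ∀ f : X → ℝ, (∃ M : ℝ, ∀ x, |f x| ≤ M) →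
          (∀ x y : X, |f x - f y| ≤ (ε / S) * dist x y) →
          ∀ x : X, |f x - ∑' p : Fin (d + 1) × J, f (xpt p.1 p.2) * e p.1 p.2 x|
            ≤ ε) := by
  classical
  obtain ⟨istar, histar⟩ := Finite.exists_max (fun i : Fin (d+1) => Cardinal.mk (Kc U i))
  -- some color class is infinite
  have hKstInf : Infinite (Kc U istar) := by
    have hex : ∃ i, Infinite (Kc U i) := by
      by_contra hc
      push_neg at hc
      have hfin : ∀ i, {q : K U | q.1.1 = i}.Finite := by
        intro i
        rw [← Set.finite_coe_iff]
        exact hc i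
      have huniv : (Set.univ : Set (K U)) = ⋃ i, {q : K U | q.1.1 = i} := by
        ext q; simp
      have : (Set.univ : Set (K U)).Finite := by
        rw [huniv]; exact Set.finite_iUnion hfin
      exact Set.infinite_univ this
    obtain ⟨i0, hi0⟩ := hex
    rw [Cardinal.infinite_iff] at hi0 ⊢
    exact le_trans hi0 (histar i0)
  haveI := hKstInf
  -- the index equivalences
  have hcard : ∀ i, Cardinal.mk (Cc U r istar i) = Cardinal.mk (Kc U istar) := by
    intro i
    have hsum : Cardinal.mk (Cc U r istar i)
        = Cardinal.mk (Kc' U r istar i) + Cardinal.mk {w : Kc U istar // i ≠ istar} := by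
      simp [Cc]
    by_cases hi : i = istar
    · haveI : IsEmpty {w : Kc U istar // i ≠ istar} := ⟨fun w => w.2 hi⟩
      have h0 : Cardinal.mk {w : Kc U istar // i ≠ istar} = 0 := Cardinal.mk_eq_zero _
      have h1 : Cardinal.mk (Kc' U r istar i) = Cardinal.mk (Kc U i) := by
        apply Cardinal.mk_congr
        apply Equiv.subtypeEquivRight
        intro q
        constructor
        · rintro ⟨h, -⟩; exact h
        · intro h
          refine ⟨h, xi U q, ?_⟩
          unfold Bf
          rw [if_pos (h.trans hi), beta_mem_one U r hr q _ (xi_mem U q)]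
          norm_num
      rw [hsum, h0, h1, add_zero, hi]
    · have h0 : Cardinal.mk {w : Kc U istar // i ≠ istar} = Cardinal.mk (Kc U istar) :=
        Cardinal.mk_congr (Equiv.subtypeUnivEquiv (fun _ => hi))
      rw [hsum, h0]
      apply Cardinal.add_eq_right (Cardinal.infinite_iff.1 hKstInf)
      calc Cardinal.mk (Kc' U r istar i) ≤ Cardinal.mk (Kc U i) :=
            Cardinal.mk_subtype_mono (fun q hq => hq.1)
        _ ≤ Cardinal.mk (Kc U istar) := histar i
  have hψex : ∀ i, Nonempty (Kc U istar ≃ Cc U r istar i) :=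
    fun i => Cardinal.eq.1 (hcard i).symm
  set ψ : ∀ i, Kc U istar ≃ Cc U r istar i := fun i => (hψex i).some with hψdef
  set g : Fin (d+1) × Kc U istar → X → ℝ :=
    fun p x => slotF U r istar p.1 (ψ p.1 p.2) x with hg
  -- basic bounds for g
  have hgnn : ∀ p x, 0 ≤ g p x := by
    intro p x
    rcases hc : ψ p.1 p.2 with q | w <;> simp only [hg, slotF, hc, Sum.elim_inl, Sum.elim_inr]
    · exact Bf_nonneg U r istar hr q.1 x
    · exact Pw_nonneg U r istar hr w.1 x
  have hgle1 : ∀ p x, g p x ≤ 1 := by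
    intro p x
    rcases hc : ψ p.1 p.2 with q | w <;> simp only [hg, slotF, hc, Sum.elim_inl, Sum.elim_inr]
    · exact Bf_le_one U r istar hr q.1 x
    · exact Pw_le_one U r istar hr w.1 x
  have hglip : ∀ p x y, |g p x - g p y| ≤ (104/r) * dist x y := by
    intro p x y
    rcases hc : ψ p.1 p.2 with q | w <;> simp only [hg, slotF, hc, Sum.elim_inl, Sum.elim_inr]
    · exact Bf_lip U r istar hr q.1 x y
    · refine le_trans (Pw_lip U r istar hr w.1 x y) ?_
      have h4 : (25:ℝ)/r ≤ 104/r := by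
        rw [div_le_div_iff_of_pos_right hr] <;> norm_num
      exact mul_le_mul_of_nonneg_right h4 dist_nonneg
  -- pairwise disjointness of slots of the same color
  have hdisjslot : ∀ i (j j' : Kc U istar), j ≠ j' → ∀ x,
      g (i, j) x = 0 ∨ g (i, j') x = 0 := by
    intro i j j' hne x
    by_contra hc
    push_neg at hc
    obtain ⟨h1, h2⟩ := hc
    have hjj : ψ i j ≠ ψ i j' := fun h => hne ((ψ i).injective h)
    simp only [hg] at h1 h2
    rcases hc1 : ψ i j with q | w <;> rcases hc2 : ψ i j' with q' | w' <;>
      rw [hc1, hc2] at hjj <;>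
      simp only [hc1, hc2, slotF, Sum.elim_inl, Sum.elim_inr] at h1 h2
    · -- both base functions of color i
      have hqq : q.1 ≠ q'.1 := by
        intro h
        exact hjj (by rw [Subtype.ext h])
      exact color_uniq U r hr hdisj q.1 q'.1 (by rw [q.2.1, q'.2.1]) hqq x
        (Bf_ne_zero_beta U r istar hr q.1 x h1)
        (Bf_ne_zero_beta U r istar hr q'.1 x h2)
    · -- base vs pad
      exact BP_disj U r istar hr hdisj q.1 (by rw [q.2.1]; exact w'.2) w'.1 x h1 h2
    · exact BP_disj U r istar hr hdisj q'.1 (by rw [q'.2.1]; exact w.2) w.1 x h2 h1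
    · have hww : w.1 ≠ w'.1 := by
        intro h
        exact hjj (by rw [Subtype.ext h])
      exact bull_uniq U r istar hr hdisj w.1 w'.1 hww x h1 h2
  -- finite support
  have hsupp : ∀ x : X, Set.InjOn (fun p : Fin (d+1) × Kc U istar => (p.1, (ψ p.1 p.2).isLeft))
      {p | g p x ≠ 0} := by
    intro x p hp p' hp' he
    obtain ⟨i, j⟩ := p
    obtain ⟨i', j'⟩ := p'
    have h1 : i = i' := congrArg Prod.fst he
    subst h1
    have h2 : (ψ i j).isLeft = (ψ i j').isLeft := congrArg Prod.snd he
    simp only [Set.mem_setOf_eq] at hp hp'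
    by_contra hcon
    have hne : j ≠ j' := fun h => hcon (by rw [h])
    rcases hdisjslot i j j' hne x with h | h
    · exact hp h
    · exact hp' h
  have hfin : ∀ x : X, {p : Fin (d+1) × Kc U istar | g p x ≠ 0}.Finite := by
    intro x
    exact Set.Finite.of_finite_image (Set.toFinite _) (hsupp x)
  have hsummable : ∀ x, Summable (fun p => g p x) := by
    intro x
    apply summable_of_ne_finset_zero (s := (hfin x).toFinset)
    intro p hp
    by_contra h
    exact hp ((hfin x).mem_toFinset.2 h)
  set Φ : X → ℝ := fun x => ∑' p, g p x with hΦ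
  have hgleΦ : ∀ p x, g p x ≤ Φ x :=
    fun p x => Summable.le_tsum (hsummable x) p (fun j _ => hgnn j x)
  -- card bound on supports
  have hcard2 : ∀ x, ((hfin x).toFinset).card ≤ 2*(d+1) := by
    intro x
    have hinj : Set.InjOn (fun p : Fin (d+1) × Kc U istar => (p.1, (ψ p.1 p.2).isLeft))
        ((hfin x).toFinset : Set (Fin (d+1) × Kc U istar)) := by
      intro a ha b hb hab
      exact hsupp x ((hfin x).mem_toFinset.1 ha) ((hfin x).mem_toFinset.1 hb) hab
    calc ((hfin x).toFinset).card
        ≤ (Finset.univ : Finset (Fin (d+1) × Bool)).card :=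
          Finset.card_le_card_of_injOn _ (fun p _ => Finset.mem_univ _) hinj
      _ = 2*(d+1) := by simp [Fintype.card_prod]; ring
  -- lower bound on Φ
  have hΦlow : ∀ x, 1/2 ≤ Φ x := by
    intro x
    have hslot : ∃ p0, 1/2 ≤ g p0 x := by
      by_cases hD : Dz U istar x < 5*(r/100)
      · have hzne : (Zs U istar).Nonempty := Set.range_nonempty _
        unfold Dz at hD
        obtain ⟨z, hz, hdz⟩ := (Metric.infDist_lt_iff hzne).1 hD
        obtain ⟨w, rfl⟩ := hz
        have hBlow : 1/2 ≤ Bf U r istar w.1 x := by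
          unfold Bf
          rw [if_pos w.2]
          refine le_trans ?_ (beta_lower U r hr w.1 x)
          have hid : Metric.infDist x (U w.1.1.1 w.1.1.2) ≤ dist x (xi U w.1) :=
            Metric.infDist_le_dist_of_mem (xi_mem U w.1)
          have h45 : (4/r) * Metric.infDist x (U w.1.1.1 w.1.1.2) ≤ (4/r) * (5*(r/100)) := by
            apply mul_le_mul_of_nonneg_left _ (by positivity)
            exact le_trans hid (le_of_lt hdz)
          have : (4/r) * (5*(r/100)) = 1/5 := by field_simp; ring
          rw [this] at h45
          linarith
        have hBne : Bf U r istar w.1 x ≠ 0 := by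
          intro h; rw [h] at hBlow; norm_num at hBlow
        refine ⟨(istar, (ψ istar).symm (Sum.inl ⟨w.1, w.2, x, hBne⟩)), ?_⟩
        simp only [hg, Equiv.apply_symm_apply, slotF, Sum.elim_inl]
        erw [Equiv.apply_symm_apply]
        exact hBlow
      · push_neg at hD
        obtain ⟨i, j, hx⟩ := hcov x
        set q : K U := ⟨(i, j), ⟨x, hx⟩⟩ with hq
        have hB1 : Bf U r istar q x = 1 := by
          unfold Bf
          split
          · exact beta_mem_one U r hr q x hx
          · show beta U r q x * mu U r istar x = 1
            rw [beta_mem_one U r hr q x hx, mu_eq_one U r istar hr x hD, mul_one]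
        have hBne : Bf U r istar q x ≠ 0 := by rw [hB1]; norm_num
        refine ⟨(q.1.1, (ψ q.1.1).symm (Sum.inl ⟨q, rfl, x, hBne⟩)), ?_⟩
        simp only [hg, Equiv.apply_symm_apply, slotF, Sum.elim_inl]
        erw [Equiv.apply_symm_apply]
        show 1/2 ≤ Bf U r istar q x
        rw [hB1]
        norm_num
    obtain ⟨p0, hp0⟩ := hslot
    exact le_trans hp0 (hgleΦ p0 x)
  have hΦpos : ∀ x, 0 < Φ x := fun x => lt_of_lt_of_le (by norm_num) (hΦlow x)
  have hΦne : ∀ x, Φ x ≠ 0 := fun x => ne_of_gt (hΦpos x)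
  -- Lipschitz bound on Φ
  have hΦlip : ∀ x y, |Φ x - Φ y| ≤ (416*((d:ℝ)+1)/r) * dist x y := by
    intro x y
    set s := (hfin x).toFinset ∪ (hfin y).toFinset with hs
    have hx0 : ∀ p ∉ s, g p x = 0 := by
      intro p hp
      by_contra h
      exact hp (Finset.mem_union_left _ ((hfin x).mem_toFinset.2 h))
    have hy0 : ∀ p ∉ s, g p y = 0 := by
      intro p hp
      by_contra h
      exact hp (Finset.mem_union_right _ ((hfin y).mem_toFinset.2 h))
    have hΦx : Φ x = ∑ p ∈ s, g p x := tsum_eq_sum hx0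
    have hΦy : Φ y = ∑ p ∈ s, g p y := tsum_eq_sum hy0
    rw [hΦx, hΦy, ← Finset.sum_sub_distrib]
    refine le_trans (Finset.abs_sum_le_sum_abs _ _) ?_
    have hcards : s.card ≤ 4*(d+1) := by
      calc s.card ≤ ((hfin x).toFinset).card + ((hfin y).toFinset).card := Finset.card_union_le _ _
        _ ≤ 2*(d+1) + 2*(d+1) := add_le_add (hcard2 x) (hcard2 y)
        _ = 4*(d+1) := by ring
    calc ∑ p ∈ s, |g p x - g p y| ≤ ∑ _p ∈ s, (104/r) * dist x y :=
          Finset.sum_le_sum (fun p _ => hglip p x y)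
      _ = (s.card : ℝ) * ((104/r) * dist x y) := by rw [Finset.sum_const, nsmul_eq_mul]
      _ ≤ (4*((d:ℝ)+1)) * ((104/r) * dist x y) := by
          apply mul_le_mul_of_nonneg_right _ (by positivity)
          calc (s.card : ℝ) ≤ ((4*(d+1) : ℕ) : ℝ) := by exact_mod_cast hcards
            _ = 4*((d:ℝ)+1) := by push_cast; ring
      _ = (416*((d:ℝ)+1)/r) * dist x y := by ring
  -- the partition of unity
  have hHasSum : ∀ x, HasSum (fun p => g p x / Φ x) 1 := by
    intro x
    have := (hsummable x).hasSum.div_const (Φ x)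
    rwa [div_self (hΦne x)] at this
  -- Lipschitz for e
  have helip : ∀ p x y, |g p x / Φ x - g p y / Φ y| ≤ (1/(n:ℝ)) * dist x y := by
    intro p x y
    refine le_trans (div_lip (g p x) (g p y) (Φ x) (Φ y) ((104/r) * dist x y)
      ((416*((d:ℝ)+1)/r) * dist x y) (hΦlow x) (hΦlow y) (hgnn p y) (hgleΦ p y)
      (hglip p x y) (hΦlip x y)) ?_
    have : 2*((104/r) * dist x y) + 2*((416*((d:ℝ)+1)/r) * dist x y)
        = (208/r + 832*((d:ℝ)+1)/r) * dist x y := by ring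
    rw [this]
    exact mul_le_mul_of_nonneg_right hrn dist_nonneg
  -- support diameter
  have hdiamS : ∀ p (x y : X), g p x ≠ 0 → g p y ≠ 0 → dist x y ≤ S₂ + r := by
    intro p x y h1 h2
    simp only [hg] at h1 h2
    rcases hc : ψ p.1 p.2 with q | w <;>
      simp only [hc, slotF, Sum.elim_inl, Sum.elim_inr] at h1 h2
    · have hb1 := beta_ne_zero U r hr q.1 x (Bf_ne_zero_beta U r istar hr q.1 x h1)
      have hb2 := beta_ne_zero U r hr q.1 y (Bf_ne_zero_beta U r istar hr q.1 y h2)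
      obtain ⟨z1, hz1, hdz1⟩ := (Metric.infDist_lt_iff q.1.2).1 hb1
      obtain ⟨z2, hz2, hdz2⟩ := (Metric.infDist_lt_iff q.1.2).1 hb2
      have hzz := hdiam q.1.1.1 q.1.1.2 z1 hz1 z2 hz2
      calc dist x y ≤ dist x z1 + dist z1 y := dist_triangle _ _ _
        _ ≤ dist x z1 + (dist z1 z2 + dist z2 y) := by linarith [dist_triangle z1 z2 y]
        _ = dist x z1 + dist z1 z2 + dist y z2 := by rw [dist_comm z2 y]; ring
        _ ≤ r/4 + S₂ + r/4 := by linarith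
        _ ≤ S₂ + r := by linarith
    · have hp1 := Pw_ne_zero U r istar hr w.1 x h1
      have hp2 := Pw_ne_zero U r istar hr w.1 y h2
      calc dist x y ≤ dist x (xi U w.1.1) + dist y (xi U w.1.1) := by
            rw [dist_comm y]; exact dist_triangle _ _ _
        _ ≤ 4*(r/100) + 4*(r/100) := add_le_add (le_of_lt hp1) (le_of_lt hp2)
        _ ≤ S₂ + r := by linarith
  -- xpt
  have hxptne : ∀ i (j : Kc U istar), g (i, j) (xptF U r istar i (ψ i j)) ≠ 0 := by
    intro i j
    rcases hc : ψ i j with q | w <;>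
      simp only [hg, slotF, xptF, hc, Sum.elim_inl, Sum.elim_inr]
    · exact q.2.2.choose_spec
    · rw [Pw_self U r istar hr w.1]
      norm_num
  -- assemble
  refine ⟨Kc U istar, fun i j x => g (i, j) x / Φ x,
    fun i j => xptF U r istar i (ψ i j), S₂ + r, by linarith, ?_, ?_, ?_, ?_, ?_, ?_, ?_⟩
  · intro i j x
    exact div_nonneg (hgnn (i,j) x) (le_of_lt (hΦpos x))
  · intro x
    exact hHasSum x
  · intro i j j' hne x
    show g (i,j) x / Φ x = 0 ∨ g (i,j') x / Φ x = 0
    rcases hdisjslot i j j' hne x with h | h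
    · left; rw [h]; simp
    · right; rw [h]; simp
  · intro i j x y
    exact helip (i, j) x y
  · intro i j x y h1 h2
    have h1' : g (i,j) x / Φ x ≠ 0 := h1
    have h2' : g (i,j) y / Φ y ≠ 0 := h2
    apply hdiamS (i, j) x y
    · intro h; exact h1' (by rw [h]; simp)
    · intro h; exact h2' (by rw [h]; simp)
  · intro i j
    show g (i,j) (xptF U r istar i (ψ i j)) / Φ _ ≠ 0
    exact div_ne_zero (hxptne i j) (hΦne _)
  · intro ε hε f _ hfl x
    have hS0 : 0 < S₂ + r := by linarith
    set S : ℝ := S₂ + r with hSdef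
    set e : Fin (d+1) × Kc U istar → ℝ := fun p => g p x / Φ x with he
    have henn : ∀ p, 0 ≤ e p := fun p => div_nonneg (hgnn p x) (le_of_lt (hΦpos x))
    have hesum : Summable e := (hsummable x).div_const _
    have hesum1 : ∑' p, e p = 1 := (hHasSum x).tsum_eq
    have hterm : ∀ p, e p ≠ 0 → |f x - f (xptF U r istar p.1 (ψ p.1 p.2))| ≤ ε := by
      intro p hp
      have hgx : g p x ≠ 0 := by
        intro h; apply hp; simp only [he]; rw [h]; simp
      have hd := hdiamS p x (xptF U r istar p.1 (ψ p.1 p.2)) hgx (hxptne p.1 p.2)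
      refine le_trans (hfl x _) ?_
      calc (ε/S) * dist x (xptF U r istar p.1 (ψ p.1 p.2)) ≤ (ε/S) * S := by
            apply mul_le_mul_of_nonneg_left hd (by positivity)
        _ = ε := by field_simp
    -- summability of the approximant
    have hasum : Summable (fun p => f (xptF U r istar p.1 (ψ p.1 p.2)) * e p) := by
      apply summable_of_ne_finset_zero (s := (hfin x).toFinset)
      intro p hp
      have hgx : g p x = 0 := by
        by_contra h
        exact hp ((hfin x).mem_toFinset.2 h)
      simp only [he]
      rw [hgx]
      simp
    have hsub : Summable (fun p => (f x - f (xptF U r istar p.1 (ψ p.1 p.2))) * e p) := by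
      have : (fun p => (f x - f (xptF U r istar p.1 (ψ p.1 p.2))) * e p)
          = fun p => f x * e p - f (xptF U r istar p.1 (ψ p.1 p.2)) * e p := by
        funext p; ring
      rw [this]
      exact (hesum.mul_left (f x)).sub hasum
    have hkey : f x - ∑' p, f (xptF U r istar p.1 (ψ p.1 p.2)) * e p
        = ∑' p, (f x - f (xptF U r istar p.1 (ψ p.1 p.2))) * e p := by
      have h1 : ∑' p, f x * e p = f x := by
        rw [tsum_mul_left, hesum1, mul_one]
      have h2 : (fun p => (f x - f (xptF U r istar p.1 (ψ p.1 p.2))) * e p)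
          = fun p => f x * e p - f (xptF U r istar p.1 (ψ p.1 p.2)) * e p := by
        funext p; ring
      rw [h2, Summable.tsum_sub (hesum.mul_left (f x)) hasum, h1]
    have hup : ∑' p, (f x - f (xptF U r istar p.1 (ψ p.1 p.2))) * e p ≤ ε := by
      have hle : ∀ p, (f x - f (xptF U r istar p.1 (ψ p.1 p.2))) * e p ≤ ε * e p := by
        intro p
        by_cases hp : e p = 0
        · rw [hp]; simp
        · apply mul_le_mul_of_nonneg_right _ (henn p)
          exact le_trans (le_abs_self _) (hterm p hp)
      calc ∑' p, (f x - f (xptF U r istar p.1 (ψ p.1 p.2))) * e p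
          ≤ ∑' p, ε * e p := Summable.tsum_le_tsum hle hsub (hesum.mul_left ε)
        _ = ε := by rw [tsum_mul_left, hesum1, mul_one]
    have hlo : -ε ≤ ∑' p, (f x - f (xptF U r istar p.1 (ψ p.1 p.2))) * e p := by
      have hle : ∀ p, (-ε) * e p ≤ (f x - f (xptF U r istar p.1 (ψ p.1 p.2))) * e p := by
        intro p
        by_cases hp : e p = 0
        · rw [hp]; simp
        · apply mul_le_mul_of_nonneg_right _ (henn p)
          have := hterm p hp
          have := neg_abs_le (f x - f (xptF U r istar p.1 (ψ p.1 p.2)))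
          linarith
      calc -ε = ∑' p, (-ε) * e p := by rw [tsum_mul_left, hesum1, mul_one]
        _ ≤ _ := Summable.tsum_le_tsum hle (hesum.mul_left (-ε)) hsub
    show |f x - ∑' p : Fin (d+1) × Kc U istar, f (xptF U r istar p.1 (ψ p.1 p.2)) * e p| ≤ ε
    rw [hkey, abs_le]
    exact ⟨hlo, hup⟩

end AsdimPf

/-- `X` has asymptotic dimension at most `d`: for every `r > 0` there is a cover
of `X` by `d + 1` families of sets, each `r`-disjoint and uniformly bounded. -/
def AsdimLE (X : Type*) [MetricSpace X] (d : ℕ) : Prop :=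
  ∀ r > (0 : ℝ), ∃ (J : Type) (U : Fin (d + 1) → J → Set X) (S : ℝ),
    (∀ x : X, ∃ i j, x ∈ U i j) ∧
    (∀ i, ∀ j j', j ≠ j' → ∀ x ∈ U i j, ∀ y ∈ U i j', r < dist x y) ∧
    (∀ i j, ∀ x ∈ U i j, ∀ y ∈ U i j, dist x y ≤ S)

theorem asdim_partition_of_unity_approximation
    {X : Type*} [MetricSpace X] (d : ℕ) (hX : AsdimLE X d) :
    ∀ n : ℕ, 0 < n →
      ∃ (J : Type) (e : Fin (d + 1) → J → X → ℝ) (xpt : Fin (d + 1) → J → X)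
        (S : ℝ), 0 ≤ S ∧
        -- a partition of unity
        (∀ i j x, 0 ≤ e i j x) ∧
        (∀ x : X, HasSum (fun p : Fin (d + 1) × J => e p.1 p.2 x) 1) ∧
        -- for each `i`, the supports of the `e i j` are pairwise disjoint
        (∀ i, ∀ j j', j ≠ j' → ∀ x : X, e i j x = 0 ∨ e i j' x = 0) ∧
        -- each `e i j` is `(1/n)`-Lipschitz
        (∀ i j, ∀ x y : X, |e i j x - e i j y| ≤ (1 / (n : ℝ)) * dist x y) ∧
        -- the supports have diameter uniformly bounded by `S`
        (∀ i j, ∀ x y : X, e i j x ≠ 0 → e i j y ≠ 0 → dist x y ≤ S) ∧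
        -- the chosen points lie in the supports
        (∀ i j, e i j (xpt i j) ≠ 0) ∧
        -- any sufficiently Lipschitz bounded function is approximated by its
        -- values at the points `xpt i j` against the partition of unity
        (∀ ε > (0 : ℝ), ∀ f : X → ℝ, (∃ M : ℝ, ∀ x, |f x| ≤ M) →
          (∀ x y : X, |f x - f y| ≤ (ε / S) * dist x y) →
          ∀ x : X, |f x - ∑' p : Fin (d + 1) × J, f (xpt p.1 p.2) * e p.1 p.2 x|
            ≤ ε) := by
  intro n hn
  classical
  have hn0 : (0:ℝ) < n := by exact_mod_cast hn
  rcases isEmpty_or_nonempty X with hX0 | hXne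
  · -- X empty
    refine ⟨Empty, fun _ _ _ => 0, fun _ j => j.elim, 0, le_refl 0, ?_, ?_, ?_, ?_, ?_, ?_, ?_⟩
    · intro i j x; exact le_refl 0
    · intro x; exact (hX0.false x).elim
    · intro i j j' h x; exact Or.inl rfl
    · intro i j x y; simp; positivity
    · intro i j x y h; exact absurd rfl h
    · intro i j; exact j.elim
    · intro ε hε f hM hfl x; exact (hX0.false x).elim
  · by_cases hb : ∃ C : ℝ, ∀ x y : X, dist x y ≤ C
    · -- X bounded: constant partition of unity
      obtain ⟨C, hC⟩ := hb
      obtain ⟨x₀⟩ := hXne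
      have hC0 : 0 ≤ C := by simpa using hC x₀ x₀
      have hd1 : (0:ℝ) < (d:ℝ) + 1 := by positivity
      have hsum1 : ∑ _p : Fin (d+1) × PUnit, ((d:ℝ)+1)⁻¹ = 1 := by
        rw [Finset.sum_const, Finset.card_univ]
        simp only [Fintype.card_prod, Fintype.card_fin, Fintype.card_unit, Fintype.card_punit, mul_one,
          nsmul_eq_mul]
        push_cast
        field_simp
      refine ⟨PUnit, fun _ _ _ => ((d:ℝ)+1)⁻¹, fun _ _ => x₀, C+1, by linarith,
        ?_, ?_, ?_, ?_, ?_, ?_, ?_⟩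
      · intro i j x; positivity
      · intro x
        have := hasSum_fintype (fun _p : Fin (d+1) × PUnit => ((d:ℝ)+1)⁻¹)
        rwa [hsum1] at this
      · intro i j j' h x; exact (h (Subsingleton.elim j j')).elim
      · intro i j x y; simp; positivity
      · intro i j x y _ _; exact le_trans (hC x y) (by linarith)
      · intro i j; exact ne_of_gt (by positivity)
      · intro ε hε f _ hfl x
        have hS : (0:ℝ) < C+1 := by linarith
        have htsum : ∑' _p : Fin (d+1) × PUnit, f x₀ * ((d:ℝ)+1)⁻¹ = f x₀ := by
          rw [tsum_fintype, Finset.sum_const, Finset.card_univ]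
          simp only [Fintype.card_prod, Fintype.card_fin, Fintype.card_unit, Fintype.card_punit, mul_one,
            nsmul_eq_mul]
          push_cast
          field_simp
        rw [htsum]
        refine le_trans (hfl x x₀) ?_
        calc (ε/(C+1)) * dist x x₀ ≤ (ε/(C+1)) * (C+1) := by
              apply mul_le_mul_of_nonneg_left _ (by positivity)
              exact le_trans (hC x x₀) (by linarith)
          _ = ε := by field_simp
    · -- X unbounded: main construction
      set r : ℝ := 1040*((d:ℝ)+1)*(n:ℝ) with hrdef
      have hr : 0 < r := by positivity
      obtain ⟨J₀, U, S₂, hcov, hdisj, hdiam⟩ := hX r hr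
      obtain ⟨x₀⟩ := hXne
      have hS₂ : 0 ≤ S₂ := by
        obtain ⟨i, j, hx⟩ := hcov x₀
        simpa using hdiam i j x₀ hx x₀ hx
      have hrn : 208/r + 832*((d:ℝ)+1)/r ≤ 1/(n:ℝ) := by
        have hd0 : (0:ℝ) ≤ d := Nat.cast_nonneg d
        have heq : 208/r + 832*((d:ℝ)+1)/r = (208 + 832*((d:ℝ)+1))/r := by ring
        rw [heq, div_le_div_iff₀ hr hn0]
        rw [hrdef]
        nlinarith
      have hKinf : Infinite (AsdimPf.K U) := by
        by_contra hfin
        rw [not_infinite_iff_finite] at hfin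
        have hne : Nonempty (AsdimPf.K U) := by
          obtain ⟨i, j, hx⟩ := hcov x₀
          exact ⟨⟨(i, j), ⟨x₀, hx⟩⟩⟩
        obtain ⟨qq₀, hqq₀⟩ := Finite.exists_max
          (fun qq : AsdimPf.K U × AsdimPf.K U => dist (AsdimPf.xi U qq.1) (AsdimPf.xi U qq.2))
        apply hb
        refine ⟨S₂ + dist (AsdimPf.xi U qq₀.1) (AsdimPf.xi U qq₀.2) + S₂, ?_⟩
        intro x y
        obtain ⟨i, j, hx⟩ := hcov x
        obtain ⟨i', j', hy⟩ := hcov y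
        set qx : AsdimPf.K U := ⟨(i, j), ⟨x, hx⟩⟩ with hqx
        set qy : AsdimPf.K U := ⟨(i', j'), ⟨y, hy⟩⟩ with hqy
        have h1 : dist x (AsdimPf.xi U qx) ≤ S₂ := hdiam i j x hx _ (AsdimPf.xi_mem U qx)
        have h2 : dist y (AsdimPf.xi U qy) ≤ S₂ := hdiam i' j' y hy _ (AsdimPf.xi_mem U qy)
        have h3 : dist (AsdimPf.xi U qx) (AsdimPf.xi U qy)
            ≤ dist (AsdimPf.xi U qq₀.1) (AsdimPf.xi U qq₀.2) := hqq₀ (qx, qy)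
        calc dist x y ≤ dist x (AsdimPf.xi U qx) + dist (AsdimPf.xi U qx) y := dist_triangle _ _ _
          _ ≤ dist x (AsdimPf.xi U qx) + (dist (AsdimPf.xi U qx) (AsdimPf.xi U qy)
              + dist (AsdimPf.xi U qy) y) := by linarith [dist_triangle (AsdimPf.xi U qx) (AsdimPf.xi U qy) y]
          _ = dist x (AsdimPf.xi U qx) + dist (AsdimPf.xi U qx) (AsdimPf.xi U qy)
              + dist y (AsdimPf.xi U qy) := by rw [dist_comm (AsdimPf.xi U qy) y]; ring
          _ ≤ S₂ + dist (AsdimPf.xi U qq₀.1) (AsdimPf.xi U qq₀.2) + S₂ := by linarith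
      exact AsdimPf.core n U S₂ r hr hrn hS₂ hcov hdisj hdiam hKinf
end
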